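/- arXiv:1506.02476 — 4 statements merged into one kernel-verified Lean document; each statement's English description precedes it below -/
import Mathlib

section
/- For any link pattern α of N links with α ≠ ∩∩_N (the rainbow pattern), there exists an index j ∈ {1,...,2N-1} and indices l_1 < j < j+1 < l_2 such that the links [l_1, j] and [j+1, l_2] both belong to α. -/
def IsLinkPattern (N : ℕ) (P : Finset (Fin (2 * N) × Fin (2 * N))) : Prop :=
  (∀ p ∈ P, p.1 < p.2) ∧
  (∀ x : Fin (2 * N), ∃! p, p ∈ P ∧ (x = p.1 ∨ x = p.2)) ∧
  (∀ p ∈ P, ∀ r ∈ P, p ≠ r →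
    0 < ((p.1 : ℤ) - (r.1 : ℤ)) * ((p.2 : ℤ) - (r.2 : ℤ)) *
        ((p.2 : ℤ) - (r.1 : ℤ)) * ((p.1 : ℤ) - (r.2 : ℤ)))

/-- The rainbow pattern (0-based: links `(j, 2N-1-j)` for `j < N`). -/
def rainbow (N : ℕ) : Finset (Fin (2 * N) × Fin (2 * N)) :=
  Finset.univ.filter (fun p => (p.1 : ℕ) < N ∧ (p.1 : ℕ) + (p.2 : ℕ) = 2 * N - 1)

/-- Any non-rainbow link pattern has a "valley": there are links
`[l₁, j]` and `[j+1, l₂]` in `α` with `l₁ < j < j+1 < l₂`. -/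
theorem exists_valley (N : ℕ) (P : Finset (Fin (2 * N) × Fin (2 * N)))
    (hP : IsLinkPattern N P) (hne : P ≠ rainbow N) :
    ∃ p ∈ P, ∃ r ∈ P,
      (p.1 : ℕ) < (p.2 : ℕ) ∧ (r.1 : ℕ) = (p.2 : ℕ) + 1 ∧ (r.1 : ℕ) < (r.2 : ℕ) := by
  obtain ⟨h1, h2, h3⟩ := hP
  by_contra hcon
  push_neg at hcon
  have hlt : ∀ p ∈ P, (p.1 : ℕ) < (p.2 : ℕ) := fun p hp => Fin.lt_def.mp (h1 p hp)
  have hnov : ∀ p ∈ P, ∀ r ∈ P, (r.1 : ℕ) ≠ (p.2 : ℕ) + 1 := by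
    intro p hp r hr h
    have := hcon p hp r hr (hlt p hp) h
    have := hlt r hr
    omega
  have uniq : ∀ x : Fin (2*N), ∀ p ∈ P, ∀ q ∈ P,
      (x = p.1 ∨ x = p.2) → (x = q.1 ∨ x = q.2) → p = q := by
    intro x p hp q hq hxp hxq
    obtain ⟨w, _, hw⟩ := h2 x
    rw [hw p ⟨hp, hxp⟩, hw q ⟨hq, hxq⟩]
  have cross : ∀ p ∈ P, ∀ r ∈ P, (p.1:ℕ) < (r.1:ℕ) → (r.1:ℕ) < (p.2:ℕ) →
      (p.2:ℕ) < (r.2:ℕ) → False := by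
    intro p hp r hr hab hbc hcd
    have hne' : p ≠ r := by
      intro h; rw [h] at hab; omega
    have H := h3 p hp r hr hne'
    have hA : (p.1:ℤ) - (r.1:ℤ) < 0 := by
      have : ((p.1:ℕ):ℤ) < ((r.1:ℕ):ℤ) := by exact_mod_cast hab
      push_cast; omega
    have hB : (p.2:ℤ) - (r.2:ℤ) < 0 := by
      have : ((p.2:ℕ):ℤ) < ((r.2:ℕ):ℤ) := by exact_mod_cast hcd
      push_cast; omega
    have hC : (0:ℤ) < (p.2:ℤ) - (r.1:ℤ) := by
      have : ((r.1:ℕ):ℤ) < ((p.2:ℕ):ℤ) := by exact_mod_cast hbc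
      push_cast; omega
    have hD : (p.1:ℤ) - (r.2:ℤ) < 0 := by
      have : ((p.1:ℕ):ℤ) < ((r.2:ℕ):ℤ) := by exact_mod_cast (by omega : (p.1:ℕ) < (r.2:ℕ))
      push_cast; omega
    have := mul_neg_of_pos_of_neg (mul_pos (mul_pos_of_neg_of_neg hA hB) hC) hD
    linarith
  have key : ∀ k, k < N → ∀ p ∈ P, ((p.1:ℕ) = k ∨ (p.2:ℕ) = k) →
      (p.1:ℕ) = k ∧ (p.1:ℕ) + (p.2:ℕ) = 2*N - 1 := by
    intro k
    induction k using Nat.strong_induction_on with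
    | _ k IH =>
      intro hkN p hp hpk
      have hp2lt : (p.2:ℕ) < 2*N := p.2.isLt
      have hp1lt : (p.1:ℕ) < 2*N := p.1.isLt
      have hplt := hlt p hp
      have hp1 : (p.1:ℕ) = k := by
        rcases hpk with h | h
        · exact h
        · exfalso
          have h1k : (p.1:ℕ) < k := by omega
          have := IH (p.1:ℕ) h1k (by omega) p hp (Or.inl rfl)
          omega
      have hub : (p.1:ℕ) + (p.2:ℕ) ≤ 2*N - 1 := by
        by_contra hgt
        push_neg at hgt
        set m : ℕ := 2*N - 1 - (p.2:ℕ) with hm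
        have hmk : m < k := by omega
        obtain ⟨q, ⟨hq, hxq⟩, _⟩ := h2 ⟨m, by omega⟩
        have hq1 : (q.1:ℕ) = m ∨ (q.2:ℕ) = m := by
          rcases hxq with h | h
          · left; rw [← h]
          · right; rw [← h]
        have hQ := IH m hmk (by omega) q hq hq1
        have hq2 : (q.2:ℕ) = (p.2:ℕ) := by omega
        have hqp : q = p := uniq p.2 q hq p hp (Or.inr (Fin.ext hq2.symm)) (Or.inr rfl)
        rw [hqp] at hQ
        omega
      rcases Nat.lt_or_ge ((p.1:ℕ) + (p.2:ℕ)) (2*N-1) with hcase | hcase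
      · exfalso
        have hx : (p.2:ℕ) + 1 < 2*N := by omega
        obtain ⟨r, ⟨hr, hxr⟩, _⟩ := h2 ⟨(p.2:ℕ)+1, hx⟩
        have hrlt := hlt r hr
        rcases hxr with h | h
        · exact hnov p hp r hr (by rw [← h])
        · have hr2 : (r.2:ℕ) = (p.2:ℕ)+1 := by rw [← h]
          rcases Nat.lt_trichotomy ((r.1:ℕ)) k with hc | hc | hc
          · have := IH (r.1:ℕ) hc (by omega) r hr (Or.inl rfl)
            omega
          · have hrp : r = p := uniq p.1 r hr p hp (Or.inl (Fin.ext (by omega))) (Or.inl rfl)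
            rw [hrp] at hr2; omega
          · rcases Nat.lt_or_ge ((r.1:ℕ)) ((p.2:ℕ)) with hd | hd
            · exact cross p hp r hr (by omega) hd (by omega)
            · have he : (r.1:ℕ) = (p.2:ℕ) := by omega
              have hrp : r = p := uniq p.2 r hr p hp (Or.inl (Fin.ext he.symm)) (Or.inr rfl)
              rw [hrp] at hr2; omega
      · exact ⟨hp1, by omega⟩
  apply hne
  ext p
  simp only [rainbow, Finset.mem_filter, Finset.mem_univ, true_and]
  constructor
  · intro hp
    have hp1lt : (p.1:ℕ) < 2*N := p.1.isLt
    have hp2lt : (p.2:ℕ) < 2*N := p.2.isLt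
    have hlt1 : (p.1:ℕ) < N := by
      by_contra hge
      push_neg at hge
      set m : ℕ := 2*N-1-(p.1:ℕ) with hm
      have hmN : m < N := by omega
      obtain ⟨q, ⟨hq, hxq⟩, _⟩ := h2 ⟨m, by omega⟩
      have hq1 : (q.1:ℕ) = m ∨ (q.2:ℕ) = m := by
        rcases hxq with h | h
        · left; rw [← h]
        · right; rw [← h]
      have hQ := key m hmN q hq hq1
      have hq2 : (q.2:ℕ) = (p.1:ℕ) := by omega
      have hqp : q = p := uniq p.1 q hq p hp (Or.inr (Fin.ext hq2.symm)) (Or.inl rfl)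
      rw [hqp] at hQ; omega
    exact ⟨hlt1, (key (p.1:ℕ) hlt1 p hp (Or.inl rfl)).2⟩
  · rintro ⟨hpN, hps⟩
    have hp2lt : (p.2:ℕ) < 2*N := p.2.isLt
    obtain ⟨q, ⟨hq, hxq⟩, _⟩ := h2 p.1
    have hq1 : (q.1:ℕ) = (p.1:ℕ) ∨ (q.2:ℕ) = (p.1:ℕ) := by
      rcases hxq with h | h
      · left; rw [← h]
      · right; rw [← h]
    have hQ := key (p.1:ℕ) hpN q hq hq1
    have hq1' : q.1 = p.1 := Fin.ext hQ.1
    have hq2' : q.2 = p.2 := Fin.ext (by omega)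
    have : q = p := Prod.ext hq1' hq2'
    rw [← this]; exact hq
end

section
/- Fix a link pattern α of N links and an index j ∈ {1,...,2N-1}. The following are equivalent: (i) there exist l_1 < j < j+1 < l_2 with [l_1,j] ∈ α and [j+1,l_2] ∈ α; (ii) [j,j+1] ∉ α and α ⪯ β for every link pattern β with ℘_j(β) = ℘_j(α), where ℘_j is the tying operation and ⪯ is the Dyck-walk partial order. -/
/-- The Dyck walk associated to a link pattern; it induces the partial order
`α ⪯ β ↔ ∀ t, walkOf α t ≤ walkOf β t`. -/
def walkOf (N : ℕ) (P : Finset (Fin (2 * N) × Fin (2 * N))) : Fin (2 * N + 1) → ℤ :=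
  fun t => ((P.filter (fun p => (p.1 : ℕ) < (t : ℕ))).card : ℤ) -
    ((P.filter (fun p => (p.2 : ℕ) < (t : ℕ))).card : ℤ)

/-- The tying operation `℘_j` at consecutive points `j`, `k = j+1`, as a relation:
`Tie N j k α β` holds iff `β = ℘_j(α)`. If `[j,k] ∈ α` then `β = α`; otherwise, with `j`
matched to `l₁` and `k` matched to `l₂` in `α`, the links through `j` and `k` are replaced
by `[j,k]` and `[l₁,l₂]`. -/
def Tie (N : ℕ) (j k : Fin (2 * N)) (α β : Finset (Fin (2 * N) × Fin (2 * N))) : Prop :=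
  ((j, k) ∈ α ∧ β = α) ∨
  ((j, k) ∉ α ∧ ∃ l₁ l₂ : Fin (2 * N),
    ((l₁, j) ∈ α ∨ (j, l₁) ∈ α) ∧ ((l₂, k) ∈ α ∨ (k, l₂) ∈ α) ∧
    β = (α.filter (fun p => p.1 ≠ j ∧ p.2 ≠ j ∧ p.1 ≠ k ∧ p.2 ≠ k)) ∪
      {(j, k), if l₁ ≤ l₂ then (l₁, l₂) else (l₂, l₁)})

set_option maxHeartbeats 1000000
lemma nc_iff (a b c d : ℤ) (hab : a < b) (hcd : c < d) :
    0 < (a-c)*(b-d)*(b-c)*(a-d) ↔ (b<c ∨ d<a ∨ (c<a ∧ b<d) ∨ (a<c ∧ d<b)) := by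
  have key : (a-c)*(b-d)*(b-c)*(a-d) = ((a-c)*(b-d)) * ((b-c)*(a-d)) := by ring
  constructor
  · intro h
    by_contra hcon
    push_neg at hcon
    obtain ⟨h1, h2, h3, h4⟩ := hcon
    rcases lt_trichotomy a c with hac | hac | hac
    · have hbd := h4 hac
      rcases eq_or_lt_of_le hbd with hbd | hbd
      · have : (a-c)*(b-d)*(b-c)*(a-d) = 0 := by rw [hbd]; ring
        linarith
      · have g1 : 0 < (a-c)*(b-d) := mul_pos_of_neg_of_neg (by linarith) (by linarith)
        have g2 : (b-c)*(a-d) ≤ 0 := mul_nonpos_iff.mpr (Or.inl ⟨by linarith, by linarith⟩)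
        nlinarith
    · have : (a-c)*(b-d)*(b-c)*(a-d) = 0 := by rw [hac]; ring
      linarith
    · have hdb := h3 hac
      rcases eq_or_lt_of_le hdb with hdb | hdb
      · have : (a-c)*(b-d)*(b-c)*(a-d) = 0 := by rw [hdb]; ring
        linarith
      · have g1 : 0 < (a-c)*(b-d) := mul_pos (by linarith) (by linarith)
        have g2 : (b-c)*(a-d) ≤ 0 := mul_nonpos_iff.mpr (Or.inl ⟨by linarith, by linarith⟩)
        nlinarith
  · rintro (h | h | ⟨h1, h2⟩ | ⟨h1, h2⟩) <;> rw [key]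
    · exact mul_pos (mul_pos_of_neg_of_neg (by linarith) (by linarith))
        (mul_pos_of_neg_of_neg (by linarith) (by linarith))
    · exact mul_pos (mul_pos (by linarith) (by linarith))
        (mul_pos (by linarith) (by linarith))
    · exact mul_pos_of_neg_of_neg (mul_neg_of_pos_of_neg (by linarith) (by linarith))
        (mul_neg_of_pos_of_neg (by linarith) (by linarith))
    · exact mul_pos_of_neg_of_neg (mul_neg_of_neg_of_pos (by linarith) (by linarith))
        (mul_neg_of_pos_of_neg (by linarith) (by linarith))

set_option maxHeartbeats 1000000

lemma walk_insert (N : ℕ) (P : Finset (Fin (2*N) × Fin (2*N))) (p : Fin (2*N) × Fin (2*N))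
    (hp : p ∉ P) (t : Fin (2*N+1)) :
    walkOf N (insert p P) t = walkOf N P t +
      ((if (p.1:ℕ) < (t:ℕ) then (1:ℤ) else 0) - (if (p.2:ℕ) < (t:ℕ) then 1 else 0)) := by
  unfold walkOf
  rw [Finset.filter_insert, Finset.filter_insert]
  have h1 : p ∉ P.filter (fun q => (q.1:ℕ) < (t:ℕ)) := fun h => hp (Finset.mem_of_mem_filter _ h)
  have h2 : p ∉ P.filter (fun q => (q.2:ℕ) < (t:ℕ)) := fun h => hp (Finset.mem_of_mem_filter _ h)
  split_ifs
  · rw [Finset.card_insert_of_notMem h1, Finset.card_insert_of_notMem h2]; push_cast; ring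
  · rw [Finset.card_insert_of_notMem h1]; push_cast; ring
  · rw [Finset.card_insert_of_notMem h2]; push_cast; ring
  · push_cast; ring

lemma unique_through {N : ℕ} {δ : Finset (Fin (2*N) × Fin (2*N))} (hδ : IsLinkPattern N δ)
    {x : Fin (2*N)} {p q : Fin (2*N) × Fin (2*N)} (hp : p ∈ δ) (hq : q ∈ δ)
    (hxp : x = p.1 ∨ x = p.2) (hxq : x = q.1 ∨ x = q.2) : p = q := by
  obtain ⟨w, _, hu⟩ := hδ.2.1 x
  exact (hu p ⟨hp, hxp⟩).trans (hu q ⟨hq, hxq⟩).symm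

lemma tie_structure (N : ℕ) (δ γ : Finset (Fin (2*N) × Fin (2*N))) (hδ : IsLinkPattern N δ)
    (j k : Fin (2*N)) (hk : (k:ℕ) = (j:ℕ) + 1) (hjk : (j,k) ∉ δ) (hT : Tie N j k δ γ) :
    ∃ l₁ l₂ : Fin (2*N),
      (((l₁,j) ∈ δ ∧ (l₁:ℕ) < (j:ℕ)) ∨ ((j,l₁) ∈ δ ∧ (k:ℕ) < (l₁:ℕ))) ∧
      (((l₂,k) ∈ δ ∧ (l₂:ℕ) < (j:ℕ)) ∨ ((k,l₂) ∈ δ ∧ (k:ℕ) < (l₂:ℕ))) ∧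
      (∀ t : Fin (2*N+1), walkOf N γ t = walkOf N δ t +
        ((if (j:ℕ) < (t:ℕ) then (1:ℤ) else 0) - (if (k:ℕ) < (t:ℕ) then 1 else 0)
         + ((if min (l₁:ℕ) (l₂:ℕ) < (t:ℕ) then 1 else 0) - (if max (l₁:ℕ) (l₂:ℕ) < (t:ℕ) then 1 else 0))
         - ((if min (l₁:ℕ) (j:ℕ) < (t:ℕ) then 1 else 0) - (if max (l₁:ℕ) (j:ℕ) < (t:ℕ) then 1 else 0))
         - ((if min (l₂:ℕ) (k:ℕ) < (t:ℕ) then 1 else 0) - (if max (l₂:ℕ) (k:ℕ) < (t:ℕ) then 1 else 0)))) := by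
  rcases hT with ⟨h, _⟩ | ⟨_, l₁, l₂, h1, h2, hγ⟩
  · exact absurd h hjk
  have hc1 : ((l₁,j) ∈ δ ∧ (l₁:ℕ) < (j:ℕ)) ∨ ((j,l₁) ∈ δ ∧ (k:ℕ) < (l₁:ℕ)) := by
    rcases h1 with h | h
    · exact Or.inl ⟨h, hδ.1 _ h⟩
    · have hlk : (l₁:ℕ) ≠ (k:ℕ) := fun he => hjk (by rwa [show l₁ = k from Fin.ext he] at h)
      have hj : (j:ℕ) < (l₁:ℕ) := hδ.1 _ h
      exact Or.inr ⟨h, by omega⟩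
  have hc2 : ((l₂,k) ∈ δ ∧ (l₂:ℕ) < (j:ℕ)) ∨ ((k,l₂) ∈ δ ∧ (k:ℕ) < (l₂:ℕ)) := by
    rcases h2 with h | h
    · have hlj : (l₂:ℕ) ≠ (j:ℕ) := fun he => hjk (by rwa [show l₂ = j from Fin.ext he] at h)
      have hj : (l₂:ℕ) < (k:ℕ) := hδ.1 _ h
      exact Or.inl ⟨h, by omega⟩
    · exact Or.inr ⟨h, hδ.1 _ h⟩
  refine ⟨l₁, l₂, hc1, hc2, ?_⟩
  -- basic value facts
  have hv1j : (l₁:ℕ) ≠ (j:ℕ) := by rcases hc1 with ⟨_,h⟩|⟨_,h⟩ <;> omega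
  have hv1k : (l₁:ℕ) ≠ (k:ℕ) := by rcases hc1 with ⟨_,h⟩|⟨_,h⟩ <;> omega
  have hv2j : (l₂:ℕ) ≠ (j:ℕ) := by rcases hc2 with ⟨_,h⟩|⟨_,h⟩ <;> omega
  have hv2k : (l₂:ℕ) ≠ (k:ℕ) := by rcases hc2 with ⟨_,h⟩|⟨_,h⟩ <;> omega
  set F := δ.filter (fun p => p.1 ≠ j ∧ p.2 ≠ j ∧ p.1 ≠ k ∧ p.2 ≠ k) with hFdef
  have mem_F : ∀ q, q ∈ F ↔ q ∈ δ ∧ (q.1 ≠ j ∧ q.2 ≠ j ∧ q.1 ≠ k ∧ q.2 ≠ k) := by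
    intro q; rw [hFdef, Finset.mem_filter]
  obtain ⟨p, hpmem, hpE⟩ : ∃ p, p ∈ δ ∧
      ((p = (l₁,j) ∧ (l₁:ℕ) < (j:ℕ)) ∨ (p = (j,l₁) ∧ (k:ℕ) < (l₁:ℕ))) := by
    rcases hc1 with ⟨h,o⟩|⟨h,o⟩
    exacts [⟨_, h, Or.inl ⟨rfl,o⟩⟩, ⟨_, h, Or.inr ⟨rfl,o⟩⟩]
  obtain ⟨r, hrmem, hrE⟩ : ∃ r, r ∈ δ ∧
      ((r = (l₂,k) ∧ (l₂:ℕ) < (j:ℕ)) ∨ (r = (k,l₂) ∧ (k:ℕ) < (l₂:ℕ))) := by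
    rcases hc2 with ⟨h,o⟩|⟨h,o⟩
    exacts [⟨_, h, Or.inl ⟨rfl,o⟩⟩, ⟨_, h, Or.inr ⟨rfl,o⟩⟩]
  have hpe : l₁ = p.1 ∨ l₁ = p.2 := by rcases hpE with ⟨he,_⟩|⟨he,_⟩ <;> rw [he] <;> simp
  have hpej : j = p.1 ∨ j = p.2 := by rcases hpE with ⟨he,_⟩|⟨he,_⟩ <;> rw [he] <;> simp
  have hre : l₂ = r.1 ∨ l₂ = r.2 := by rcases hrE with ⟨he,_⟩|⟨he,_⟩ <;> rw [he] <;> simp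
  have hrek : k = r.1 ∨ k = r.2 := by rcases hrE with ⟨he,_⟩|⟨he,_⟩ <;> rw [he] <;> simp
  have hne12 : (l₁:ℕ) ≠ (l₂:ℕ) := by
    intro he
    have hl : l₁ = l₂ := Fin.ext he
    have hre' : l₁ = r.1 ∨ l₁ = r.2 := by rw [hl]; exact hre
    have hpr : p = r := unique_through hδ hpmem hrmem hpe hre'
    rcases hpE with ⟨hEp,o1⟩|⟨hEp,o1⟩ <;> rcases hrE with ⟨hEr,o2⟩|⟨hEr,o2⟩ <;>
      rw [hEp, hEr, Prod.mk.injEq] at hpr <;> obtain ⟨e1, e2⟩ := hpr <;>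
      have v1 := congrArg Fin.val e1 <;> have v2 := congrArg Fin.val e2 <;> omega
  have hpner : p ≠ r := by
    intro hpr
    rcases hpE with ⟨hEp,o1⟩|⟨hEp,o1⟩ <;> rcases hrE with ⟨hEr,o2⟩|⟨hEr,o2⟩ <;>
      rw [hEp, hEr, Prod.mk.injEq] at hpr <;> obtain ⟨e1, e2⟩ := hpr <;>
      have v1 := congrArg Fin.val e1 <;> have v2 := congrArg Fin.val e2 <;> omega
  have hpF : p ∉ F := by
    intro hcon
    obtain ⟨_, c1, c2, c3, c4⟩ := (mem_F p).mp hcon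
    rcases hpej with he|he
    exacts [c1 he.symm, c2 he.symm]
  have hrF : r ∉ F := by
    intro hcon
    obtain ⟨_, c1, c2, c3, c4⟩ := (mem_F r).mp hcon
    rcases hrek with he|he
    exacts [c3 he.symm, c4 he.symm]
  have hFeq : δ = insert p (insert r F) := by
    ext q
    simp only [Finset.mem_insert, mem_F]
    constructor
    · intro hq
      by_cases hq1 : q.1 ≠ j ∧ q.2 ≠ j ∧ q.1 ≠ k ∧ q.2 ≠ k
      · exact Or.inr (Or.inr ⟨hq, hq1⟩)
      · have hthru : q.1 = j ∨ q.2 = j ∨ q.1 = k ∨ q.2 = k := by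
          by_contra hno
          push_neg at hno
          exact hq1 ⟨hno.1, hno.2.1, hno.2.2.1, hno.2.2.2⟩
        rcases hthru with h|h|h|h
        · exact Or.inl (unique_through hδ hq hpmem (Or.inl h.symm) hpej)
        · exact Or.inl (unique_through hδ hq hpmem (Or.inr h.symm) hpej)
        · exact Or.inr (Or.inl (unique_through hδ hq hrmem (Or.inl h.symm) hrek))
        · exact Or.inr (Or.inl (unique_through hδ hq hrmem (Or.inr h.symm) hrek))
    · rintro (rfl | rfl | ⟨h,_⟩)
      exacts [hpmem, hrmem, h]
  obtain ⟨s, hsE, hsval⟩ : ∃ s : Fin (2*N) × Fin (2*N),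
      (if l₁ ≤ l₂ then (l₁,l₂) else (l₂,l₁)) = s ∧
      (((l₁:ℕ) ≤ (l₂:ℕ) ∧ s = (l₁,l₂)) ∨ ((l₂:ℕ) < (l₁:ℕ) ∧ s = (l₂,l₁))) := by
    split_ifs with h
    · exact ⟨(l₁,l₂), rfl, Or.inl ⟨h, rfl⟩⟩
    · exact ⟨(l₂,l₁), rfl, Or.inr ⟨lt_of_not_ge h, rfl⟩⟩
  rw [hsE] at hγ
  have hse : l₁ = s.1 ∨ l₁ = s.2 := by rcases hsval with ⟨_,he⟩|⟨_,he⟩ <;> rw [he] <;> simp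
  have hsF : s ∉ F := by
    intro hcon
    obtain ⟨hsδ, c1, c2, c3, c4⟩ := (mem_F s).mp hcon
    have heq : s = p := unique_through hδ hsδ hpmem hse hpe
    rcases hpE with ⟨hEp,_⟩|⟨hEp,_⟩ <;> rw [hEp] at heq
    · exact c2 (by rw [heq])
    · exact c1 (by rw [heq])
  have hsjk : ((j,k) : Fin (2*N) × Fin (2*N)) ≠ s := by
    rcases hsval with ⟨_,he⟩|⟨_,he⟩ <;> rw [he] <;> intro hcon <;>
      rw [Prod.mk.injEq] at hcon <;> obtain ⟨e1,e2⟩ := hcon <;>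
      have v1 := congrArg Fin.val e1 <;> omega
  have hjkF : ((j,k) : Fin (2*N) × Fin (2*N)) ∉ insert s F := by
    intro hcon
    rcases Finset.mem_insert.mp hcon with h|h
    · exact hsjk h
    · exact ((mem_F _).mp h).2.1 rfl
  have hpF' : p ∉ insert r F := by
    intro hcon
    rcases Finset.mem_insert.mp hcon with h|h
    exacts [hpner h, hpF h]
  have hγeq : γ = insert (j,k) (insert s F) := by
    rw [hγ]
    ext q
    simp only [Finset.mem_union, Finset.mem_insert, Finset.mem_singleton]
    constructor
    · rintro (h | h | h)
      exacts [Or.inr (Or.inr h), Or.inl h, Or.inr (Or.inl h)]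
    · rintro (h | h | h)
      exacts [Or.inr (Or.inl h), Or.inr (Or.inr h), Or.inl h]
  intro t
  rw [hγeq, hFeq, walk_insert _ _ _ hjkF, walk_insert _ _ _ hsF,
    walk_insert _ _ _ hpF', walk_insert _ _ _ hrF]
  rcases hpE with ⟨rfl, ho1⟩|⟨rfl, ho1⟩ <;> rcases hrE with ⟨rfl, ho2⟩|⟨rfl, ho2⟩ <;>
    rcases hsval with ⟨h12, rfl⟩|⟨h12, rfl⟩
  · dsimp only
    rw [Nat.min_eq_left (show (l₁:ℕ) ≤ (l₂:ℕ) by omega), Nat.max_eq_right (show (l₁:ℕ) ≤ (l₂:ℕ) by omega),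
      Nat.min_eq_left (show (l₁:ℕ) ≤ (j:ℕ) by omega), Nat.max_eq_right (show (l₁:ℕ) ≤ (j:ℕ) by omega),
      Nat.min_eq_left (show (l₂:ℕ) ≤ (k:ℕ) by omega), Nat.max_eq_right (show (l₂:ℕ) ≤ (k:ℕ) by omega)]
    split_ifs <;> omega
  · dsimp only
    rw [Nat.min_eq_right (show (l₂:ℕ) ≤ (l₁:ℕ) by omega), Nat.max_eq_left (show (l₂:ℕ) ≤ (l₁:ℕ) by omega),
      Nat.min_eq_left (show (l₁:ℕ) ≤ (j:ℕ) by omega), Nat.max_eq_right (show (l₁:ℕ) ≤ (j:ℕ) by omega),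
      Nat.min_eq_left (show (l₂:ℕ) ≤ (k:ℕ) by omega), Nat.max_eq_right (show (l₂:ℕ) ≤ (k:ℕ) by omega)]
    split_ifs <;> omega
  · dsimp only
    rw [Nat.min_eq_left (show (l₁:ℕ) ≤ (l₂:ℕ) by omega), Nat.max_eq_right (show (l₁:ℕ) ≤ (l₂:ℕ) by omega),
      Nat.min_eq_left (show (l₁:ℕ) ≤ (j:ℕ) by omega), Nat.max_eq_right (show (l₁:ℕ) ≤ (j:ℕ) by omega),
      Nat.min_eq_right (show (k:ℕ) ≤ (l₂:ℕ) by omega), Nat.max_eq_left (show (k:ℕ) ≤ (l₂:ℕ) by omega)]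
    split_ifs <;> omega
  · dsimp only
    rw [Nat.min_eq_right (show (l₂:ℕ) ≤ (l₁:ℕ) by omega), Nat.max_eq_left (show (l₂:ℕ) ≤ (l₁:ℕ) by omega),
      Nat.min_eq_left (show (l₁:ℕ) ≤ (j:ℕ) by omega), Nat.max_eq_right (show (l₁:ℕ) ≤ (j:ℕ) by omega),
      Nat.min_eq_right (show (k:ℕ) ≤ (l₂:ℕ) by omega), Nat.max_eq_left (show (k:ℕ) ≤ (l₂:ℕ) by omega)]
    split_ifs <;> omega
  · dsimp only
    rw [Nat.min_eq_left (show (l₁:ℕ) ≤ (l₂:ℕ) by omega), Nat.max_eq_right (show (l₁:ℕ) ≤ (l₂:ℕ) by omega),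
      Nat.min_eq_right (show (j:ℕ) ≤ (l₁:ℕ) by omega), Nat.max_eq_left (show (j:ℕ) ≤ (l₁:ℕ) by omega),
      Nat.min_eq_left (show (l₂:ℕ) ≤ (k:ℕ) by omega), Nat.max_eq_right (show (l₂:ℕ) ≤ (k:ℕ) by omega)]
    split_ifs <;> omega
  · dsimp only
    rw [Nat.min_eq_right (show (l₂:ℕ) ≤ (l₁:ℕ) by omega), Nat.max_eq_left (show (l₂:ℕ) ≤ (l₁:ℕ) by omega),
      Nat.min_eq_right (show (j:ℕ) ≤ (l₁:ℕ) by omega), Nat.max_eq_left (show (j:ℕ) ≤ (l₁:ℕ) by omega),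
      Nat.min_eq_left (show (l₂:ℕ) ≤ (k:ℕ) by omega), Nat.max_eq_right (show (l₂:ℕ) ≤ (k:ℕ) by omega)]
    split_ifs <;> omega
  · dsimp only
    rw [Nat.min_eq_left (show (l₁:ℕ) ≤ (l₂:ℕ) by omega), Nat.max_eq_right (show (l₁:ℕ) ≤ (l₂:ℕ) by omega),
      Nat.min_eq_right (show (j:ℕ) ≤ (l₁:ℕ) by omega), Nat.max_eq_left (show (j:ℕ) ≤ (l₁:ℕ) by omega),
      Nat.min_eq_right (show (k:ℕ) ≤ (l₂:ℕ) by omega), Nat.max_eq_left (show (k:ℕ) ≤ (l₂:ℕ) by omega)]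
    split_ifs <;> omega
  · dsimp only
    rw [Nat.min_eq_right (show (l₂:ℕ) ≤ (l₁:ℕ) by omega), Nat.max_eq_left (show (l₂:ℕ) ≤ (l₁:ℕ) by omega),
      Nat.min_eq_right (show (j:ℕ) ≤ (l₁:ℕ) by omega), Nat.max_eq_left (show (j:ℕ) ≤ (l₁:ℕ) by omega),
      Nat.min_eq_right (show (k:ℕ) ≤ (l₂:ℕ) by omega), Nat.max_eq_left (show (k:ℕ) ≤ (l₂:ℕ) by omega)]
    split_ifs <;> omega

lemma gamma_lp (N : ℕ) (α : Finset (Fin (2*N) × Fin (2*N))) (hα : IsLinkPattern N α)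
    (j k l₁ l₂ : Fin (2*N)) (hk : (k:ℕ) = (j:ℕ)+1)
    (hcase : ((l₁,j) ∈ α ∧ (l₂,k) ∈ α ∧ (l₂:ℕ) < (l₁:ℕ) ∧ (l₁:ℕ) < (j:ℕ)) ∨
             ((j,l₁) ∈ α ∧ (k,l₂) ∈ α ∧ (k:ℕ) < (l₂:ℕ) ∧ (l₂:ℕ) < (l₁:ℕ))) :
    IsLinkPattern N ((α.filter (fun p => p.1 ≠ j ∧ p.2 ≠ j ∧ p.1 ≠ k ∧ p.2 ≠ k)) ∪
      {(j,k), (l₂,l₁)}) := by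
  obtain ⟨p, hpmem, hpe, hpej, hpset⟩ : ∃ p, p ∈ α ∧ (l₁ = p.1 ∨ l₁ = p.2) ∧
      (j = p.1 ∨ j = p.2) ∧
      (((p.1:ℕ) = (l₁:ℕ) ∧ (p.2:ℕ) = (j:ℕ)) ∨ ((p.1:ℕ) = (j:ℕ) ∧ (p.2:ℕ) = (l₁:ℕ))) := by
    rcases hcase with ⟨h,_,_,_⟩|⟨h,_,_,_⟩
    · exact ⟨(l₁,j), h, Or.inl rfl, Or.inr rfl, Or.inl ⟨rfl, rfl⟩⟩
    · exact ⟨(j,l₁), h, Or.inr rfl, Or.inl rfl, Or.inr ⟨rfl, rfl⟩⟩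
  obtain ⟨r, hrmem, hre, hrek, hrset⟩ : ∃ r, r ∈ α ∧ (l₂ = r.1 ∨ l₂ = r.2) ∧
      (k = r.1 ∨ k = r.2) ∧
      (((r.1:ℕ) = (l₂:ℕ) ∧ (r.2:ℕ) = (k:ℕ)) ∨ ((r.1:ℕ) = (k:ℕ) ∧ (r.2:ℕ) = (l₂:ℕ))) := by
    rcases hcase with ⟨_,h,_,_⟩|⟨_,h,_,_⟩
    · exact ⟨(l₂,k), h, Or.inl rfl, Or.inr rfl, Or.inl ⟨rfl, rfl⟩⟩
    · exact ⟨(k,l₂), h, Or.inr rfl, Or.inl rfl, Or.inr ⟨rfl, rfl⟩⟩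
  have h21 : (l₂:ℕ) < (l₁:ℕ) := by
    rcases hcase with ⟨_,_,h,_⟩|⟨_,_,_,h⟩ <;> exact h
  have hor : ((l₁:ℕ) < (j:ℕ) ∧ (l₂:ℕ) < (j:ℕ)) ∨ ((k:ℕ) < (l₁:ℕ) ∧ (k:ℕ) < (l₂:ℕ)) := by
    rcases hcase with ⟨_,_,h3,h4⟩|⟨_,_,h3,h4⟩
    · left; omega
    · right; omega
  set G := (α.filter (fun p => p.1 ≠ j ∧ p.2 ≠ j ∧ p.1 ≠ k ∧ p.2 ≠ k)) ∪
      ({(j,k), (l₂,l₁)} : Finset (Fin (2*N) × Fin (2*N))) with hGdef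
  have mem_G : ∀ q, q ∈ G ↔
      (q ∈ α ∧ (q.1 ≠ j ∧ q.2 ≠ j ∧ q.1 ≠ k ∧ q.2 ≠ k)) ∨ q = (j,k) ∨ q = (l₂,l₁) := by
    intro q
    rw [hGdef]
    simp only [Finset.mem_union, Finset.mem_filter, Finset.mem_insert, Finset.mem_singleton]
  have hjkG : ((j,k) : Fin (2*N) × Fin (2*N)) ∈ G := (mem_G _).mpr (Or.inr (Or.inl rfl))
  have hsG : ((l₂,l₁) : Fin (2*N) × Fin (2*N)) ∈ G := (mem_G _).mpr (Or.inr (Or.inr rfl))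
  have habp : (p.1:ℕ) < (p.2:ℕ) := hα.1 p hpmem
  have habr : (r.1:ℕ) < (r.2:ℕ) := hα.1 r hrmem
  have hqfact : ∀ q : Fin (2*N) × Fin (2*N), q ∈ α → q.1 ≠ j → q.2 ≠ j → q.1 ≠ k → q.2 ≠ k →
      ((q.1:ℕ) ≠ (l₁:ℕ) ∧ (q.2:ℕ) ≠ (l₁:ℕ) ∧ (q.1:ℕ) ≠ (l₂:ℕ) ∧ (q.2:ℕ) ≠ (l₂:ℕ) ∧
       ((q.2:ℕ) < (p.1:ℕ) ∨ (p.2:ℕ) < (q.1:ℕ) ∨ ((p.1:ℕ)<(q.1:ℕ) ∧ (q.2:ℕ)<(p.2:ℕ)) ∨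
         ((q.1:ℕ)<(p.1:ℕ) ∧ (p.2:ℕ)<(q.2:ℕ))) ∧
       ((q.2:ℕ) < (r.1:ℕ) ∨ (r.2:ℕ) < (q.1:ℕ) ∨ ((r.1:ℕ)<(q.1:ℕ) ∧ (q.2:ℕ)<(r.2:ℕ)) ∨
         ((q.1:ℕ)<(r.1:ℕ) ∧ (r.2:ℕ)<(q.2:ℕ)))) := by
    intro q hq c1 c2 c3 c4
    have hqnep : q ≠ p := by
      intro he
      rcases hpej with h|h
      · exact c1 (by rw [he, ← h])
      · exact c2 (by rw [he, ← h])
    have hqner : q ≠ r := by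
      intro he
      rcases hrek with h|h
      · exact c3 (by rw [he, ← h])
      · exact c4 (by rw [he, ← h])
    have hab : (q.1:ℕ) < (q.2:ℕ) := hα.1 q hq
    have ncp := (nc_iff _ _ _ _ (by omega : (q.1:ℤ) < (q.2:ℤ))
      (by omega : (p.1:ℤ) < (p.2:ℤ))).mp (hα.2.2 q hq p hpmem hqnep)
    have ncr := (nc_iff _ _ _ _ (by omega : (q.1:ℤ) < (q.2:ℤ))
      (by omega : (r.1:ℤ) < (r.2:ℤ))).mp (hα.2.2 q hq r hrmem hqner)
    have e11 : q.1 ≠ l₁ := fun he => hqnep (unique_through hα hq hpmem (Or.inl he.symm) hpe)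
    have e12 : q.2 ≠ l₁ := fun he => hqnep (unique_through hα hq hpmem (Or.inr he.symm) hpe)
    have e21 : q.1 ≠ l₂ := fun he => hqner (unique_through hα hq hrmem (Or.inl he.symm) hre)
    have e22 : q.2 ≠ l₂ := fun he => hqner (unique_through hα hq hrmem (Or.inr he.symm) hre)
    exact ⟨fun h => e11 (Fin.ext h), fun h => e12 (Fin.ext h), fun h => e21 (Fin.ext h),
      fun h => e22 (Fin.ext h), by omega, by omega⟩
  refine ⟨?_, ?_, ?_⟩
  · -- ordered
    intro q hq
    rcases (mem_G q).mp hq with ⟨hqα, _⟩ | rfl | rfl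
    · exact hα.1 q hqα
    · exact (by omega : (j:ℕ) < (k:ℕ))
    · exact h21
  · -- unique matching
    intro x
    by_cases hxj : x = j
    · obtain rfl := hxj.symm
      refine ⟨(j,k), ⟨hjkG, Or.inl rfl⟩, ?_⟩
      rintro q ⟨hqG, hxq⟩
      rcases (mem_G q).mp hqG with ⟨hqα, c1, c2, c3, c4⟩ | rfl | rfl
      · exfalso; rcases hxq with h|h
        exacts [c1 h.symm, c2 h.symm]
      · rfl
      · exfalso; rcases hxq with h|h <;> (dsimp only at h; exact absurd (congrArg Fin.val h) (by omega))
    by_cases hxk : x = k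
    · obtain rfl := hxk.symm
      refine ⟨(j,k), ⟨hjkG, Or.inr rfl⟩, ?_⟩
      rintro q ⟨hqG, hxq⟩
      rcases (mem_G q).mp hqG with ⟨hqα, c1, c2, c3, c4⟩ | rfl | rfl
      · exfalso; rcases hxq with h|h
        exacts [c3 h.symm, c4 h.symm]
      · rfl
      · exfalso; rcases hxq with h|h <;> (dsimp only at h; exact absurd (congrArg Fin.val h) (by omega))
    by_cases hxl1 : x = l₁
    · obtain rfl := hxl1.symm
      refine ⟨(l₂,l₁), ⟨hsG, Or.inr rfl⟩, ?_⟩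
      rintro q ⟨hqG, hxq⟩
      rcases (mem_G q).mp hqG with ⟨hqα, c1, c2, c3, c4⟩ | rfl | rfl
      · exfalso
        have hqp : q = p := unique_through hα hqα hpmem hxq hpe
        rcases hpej with h|h
        · exact c1 (by rw [hqp, ← h])
        · exact c2 (by rw [hqp, ← h])
      · exfalso; rcases hxq with h|h <;> (dsimp only at h; exact absurd (congrArg Fin.val h) (by omega))
      · rfl
    by_cases hxl2 : x = l₂
    · obtain rfl := hxl2.symm
      refine ⟨(l₂,l₁), ⟨hsG, Or.inl rfl⟩, ?_⟩
      rintro q ⟨hqG, hxq⟩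
      rcases (mem_G q).mp hqG with ⟨hqα, c1, c2, c3, c4⟩ | rfl | rfl
      · exfalso
        have hqr : q = r := unique_through hα hqα hrmem hxq hre
        rcases hrek with h|h
        · exact c3 (by rw [hqr, ← h])
        · exact c4 (by rw [hqr, ← h])
      · exfalso; rcases hxq with h|h <;> (dsimp only at h; exact absurd (congrArg Fin.val h) (by omega))
      · rfl
    · obtain ⟨w, ⟨hw, hxw⟩, _⟩ := hα.2.1 x
      have hwa : w.1 ≠ j ∧ w.2 ≠ j ∧ w.1 ≠ k ∧ w.2 ≠ k := by
        refine ⟨?_, ?_, ?_, ?_⟩ <;> intro he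
        · have hwp : w = p := unique_through hα hw hpmem (Or.inl he.symm) hpej
          have hp1 : p.1 = j := by rw [← hwp]; exact he
          rcases hpe with h|h
          · exact absurd (congrArg Fin.val (h.trans hp1)) (by omega)
          · rcases hxw with hx|hx
            · exact hxj (hx.trans he)
            · exact hxl1 (hx.trans (by rw [hwp, ← h]))
        · have hwp : w = p := unique_through hα hw hpmem (Or.inr he.symm) hpej
          have hp2 : p.2 = j := by rw [← hwp]; exact he
          rcases hpe with h|h
          · rcases hxw with hx|hx
            · exact hxl1 (hx.trans (by rw [hwp, ← h]))
            · exact hxj (hx.trans he)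
          · exact absurd (congrArg Fin.val (h.trans hp2)) (by omega)
        · have hwr : w = r := unique_through hα hw hrmem (Or.inl he.symm) hrek
          have hr1 : r.1 = k := by rw [← hwr]; exact he
          rcases hre with h|h
          · exact absurd (congrArg Fin.val (h.trans hr1)) (by omega)
          · rcases hxw with hx|hx
            · exact hxk (hx.trans he)
            · exact hxl2 (hx.trans (by rw [hwr, ← h]))
        · have hwr : w = r := unique_through hα hw hrmem (Or.inr he.symm) hrek
          have hr2 : r.2 = k := by rw [← hwr]; exact he
          rcases hre with h|h
          · rcases hxw with hx|hx
            · exact hxl2 (hx.trans (by rw [hwr, ← h]))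
            · exact hxk (hx.trans he)
          · exact absurd (congrArg Fin.val (h.trans hr2)) (by omega)
      refine ⟨w, ⟨(mem_G w).mpr (Or.inl ⟨hw, hwa⟩), hxw⟩, ?_⟩
      rintro q ⟨hqG, hxq⟩
      rcases (mem_G q).mp hqG with ⟨hqα, _⟩ | rfl | rfl
      · exact unique_through hα hqα hw hxq hxw
      · exfalso; rcases hxq with h|h
        exacts [hxj h, hxk h]
      · exfalso; rcases hxq with h|h
        exacts [hxl2 h, hxl1 h]
  · -- noncrossing
    intro q hq q' hq' hne
    rcases (mem_G q).mp hq with ⟨hqα, c1, c2, c3, c4⟩ | rfl | rfl <;>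
      rcases (mem_G q').mp hq' with ⟨hqα', d1, d2, d3, d4⟩ | rfl | rfl
    · exact hα.2.2 q hqα q' hqα' hne
    · -- q filtered, q' = (j,k)
      obtain ⟨n1, n2, n3, n4, np, nr⟩ := hqfact q hqα c1 c2 c3 c4
      have hab : (q.1:ℕ) < (q.2:ℕ) := hα.1 q hqα
      have m1 : (q.1:ℕ) ≠ (j:ℕ) := fun h => c1 (Fin.ext h)
      have m2 : (q.2:ℕ) ≠ (j:ℕ) := fun h => c2 (Fin.ext h)
      have m3 : (q.1:ℕ) ≠ (k:ℕ) := fun h => c3 (Fin.ext h)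
      have m4 : (q.2:ℕ) ≠ (k:ℕ) := fun h => c4 (Fin.ext h)
      dsimp only
      exact (nc_iff _ _ _ _ (by omega) (by omega)).mpr (by omega)
    · -- q filtered, q' = (l₂,l₁)
      obtain ⟨n1, n2, n3, n4, np, nr⟩ := hqfact q hqα c1 c2 c3 c4
      have hab : (q.1:ℕ) < (q.2:ℕ) := hα.1 q hqα
      dsimp only
      exact (nc_iff _ _ _ _ (by omega) (by omega)).mpr (by omega)
    · -- q = (j,k), q' filtered
      obtain ⟨n1, n2, n3, n4, np, nr⟩ := hqfact q' hqα' d1 d2 d3 d4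
      have hab : (q'.1:ℕ) < (q'.2:ℕ) := hα.1 q' hqα'
      have m1 : (q'.1:ℕ) ≠ (j:ℕ) := fun h => d1 (Fin.ext h)
      have m2 : (q'.2:ℕ) ≠ (j:ℕ) := fun h => d2 (Fin.ext h)
      have m3 : (q'.1:ℕ) ≠ (k:ℕ) := fun h => d3 (Fin.ext h)
      have m4 : (q'.2:ℕ) ≠ (k:ℕ) := fun h => d4 (Fin.ext h)
      dsimp only
      exact (nc_iff _ _ _ _ (by omega) (by omega)).mpr (by omega)
    · exact absurd rfl hne
    · dsimp only
      exact (nc_iff _ _ _ _ (by omega) (by omega)).mpr (by omega)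
    · -- q = (l₂,l₁), q' filtered
      obtain ⟨n1, n2, n3, n4, np, nr⟩ := hqfact q' hqα' d1 d2 d3 d4
      have hab : (q'.1:ℕ) < (q'.2:ℕ) := hα.1 q' hqα'
      dsimp only
      exact (nc_iff _ _ _ _ (by omega) (by omega)).mpr (by omega)
    · dsimp only
      exact (nc_iff _ _ _ _ (by omega) (by omega)).mpr (by omega)
    · exact absurd rfl hne

/-- For a link pattern `α` and index `j` (with `k = j+1`), the following are
equivalent: (i) there are links `[l₁,j] ∈ α` and `[j+1,l₂] ∈ α` with `l₁ < j < j+1 < l₂`;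
(ii) `[j,j+1] ∉ α` and `α ⪯ β` for every link pattern `β` with `℘_j(β) = ℘_j(α)`. -/
theorem valley_iff_tie_minimal (N : ℕ) (α : Finset (Fin (2 * N) × Fin (2 * N)))
    (hα : IsLinkPattern N α) (j k : Fin (2 * N)) (hk : (k : ℕ) = (j : ℕ) + 1) :
    (∃ p ∈ α, ∃ r ∈ α, p.2 = j ∧ r.1 = k) ↔
    ((j, k) ∉ α ∧ ∀ β, IsLinkPattern N β →
      (∃ γ, Tie N j k β γ ∧ Tie N j k α γ) →
      ∀ t, walkOf N α t ≤ walkOf N β t) := by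
  constructor
  · rintro ⟨p, hp, r, hr, hpj, hrk⟩
    have hjk : (j,k) ∉ α := by
      intro hmem
      have hpe : p = (j,k) := unique_through hα hp hmem (x := j) (Or.inr hpj.symm) (Or.inl rfl)
      have h2 : p.2 = k := by rw [hpe]
      have := congrArg Fin.val (hpj.symm.trans h2)
      omega
    refine ⟨hjk, ?_⟩
    rintro β hβ ⟨γ, hTβ, hTα⟩ t
    obtain ⟨l₁, l₂, hc1, hc2, hwα⟩ := tie_structure N α γ hα j k hk hjk hTα
    have hval1 : (l₁:ℕ) < (j:ℕ) := by
      rcases hc1 with ⟨_, h⟩ | ⟨hm, h⟩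
      · exact h
      · exfalso
        have he : (j,l₁) = p := unique_through hα hm hp (x := j) (Or.inl rfl) (Or.inr hpj.symm)
        have h2 : l₁ = j := by rw [show l₁ = (j,l₁).2 from rfl, he]; exact hpj
        have := congrArg Fin.val h2
        omega
    have hval2 : (k:ℕ) < (l₂:ℕ) := by
      rcases hc2 with ⟨hm, h⟩ | ⟨_, h⟩
      · exfalso
        have he : (l₂,k) = r := unique_through hα hm hr (x := k) (Or.inr rfl) (Or.inl hrk.symm)
        have h2 : l₂ = k := by rw [show l₂ = (l₂,k).1 from rfl, he]; exact hrk
        have := congrArg Fin.val h2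
        omega
      · exact h
    have eα := hwα t
    rw [Nat.min_eq_left (show (l₁:ℕ) ≤ (l₂:ℕ) by omega),
      Nat.max_eq_right (show (l₁:ℕ) ≤ (l₂:ℕ) by omega),
      Nat.min_eq_left (show (l₁:ℕ) ≤ (j:ℕ) by omega),
      Nat.max_eq_right (show (l₁:ℕ) ≤ (j:ℕ) by omega),
      Nat.min_eq_right (show (k:ℕ) ≤ (l₂:ℕ) by omega),
      Nat.max_eq_left (show (k:ℕ) ≤ (l₂:ℕ) by omega)] at eα
    rcases hTβ with ⟨hjkβ, rfl⟩ | hT2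
    · split_ifs at eα <;> omega
    obtain ⟨m₁, m₂, hd1, hd2, hwβ⟩ := tie_structure N β γ hβ j k hk hT2.1 (Or.inr hT2)
    have eβ := hwβ t
    rcases hd1 with ⟨_, ho1⟩ | ⟨_, ho1⟩ <;> rcases hd2 with ⟨_, ho2⟩ | ⟨_, ho2⟩ <;>
      rcases le_or_gt (m₁:ℕ) (m₂:ℕ) with hmo | hmo
    · rw [Nat.min_eq_left (show (m₁:ℕ) ≤ (m₂:ℕ) by omega), Nat.max_eq_right (show (m₁:ℕ) ≤ (m₂:ℕ) by omega),
        Nat.min_eq_left (show (m₁:ℕ) ≤ (j:ℕ) by omega), Nat.max_eq_right (show (m₁:ℕ) ≤ (j:ℕ) by omega),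
        Nat.min_eq_left (show (m₂:ℕ) ≤ (k:ℕ) by omega), Nat.max_eq_right (show (m₂:ℕ) ≤ (k:ℕ) by omega)] at eβ
      split_ifs at eα eβ <;> omega
    · rw [Nat.min_eq_right (show (m₂:ℕ) ≤ (m₁:ℕ) by omega), Nat.max_eq_left (show (m₂:ℕ) ≤ (m₁:ℕ) by omega),
        Nat.min_eq_left (show (m₁:ℕ) ≤ (j:ℕ) by omega), Nat.max_eq_right (show (m₁:ℕ) ≤ (j:ℕ) by omega),
        Nat.min_eq_left (show (m₂:ℕ) ≤ (k:ℕ) by omega), Nat.max_eq_right (show (m₂:ℕ) ≤ (k:ℕ) by omega)] at eβ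
      split_ifs at eα eβ <;> omega
    · rw [Nat.min_eq_left (show (m₁:ℕ) ≤ (m₂:ℕ) by omega), Nat.max_eq_right (show (m₁:ℕ) ≤ (m₂:ℕ) by omega),
        Nat.min_eq_left (show (m₁:ℕ) ≤ (j:ℕ) by omega), Nat.max_eq_right (show (m₁:ℕ) ≤ (j:ℕ) by omega),
        Nat.min_eq_right (show (k:ℕ) ≤ (m₂:ℕ) by omega), Nat.max_eq_left (show (k:ℕ) ≤ (m₂:ℕ) by omega)] at eβ
      split_ifs at eα eβ <;> omega
    · rw [Nat.min_eq_right (show (m₂:ℕ) ≤ (m₁:ℕ) by omega), Nat.max_eq_left (show (m₂:ℕ) ≤ (m₁:ℕ) by omega),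
        Nat.min_eq_left (show (m₁:ℕ) ≤ (j:ℕ) by omega), Nat.max_eq_right (show (m₁:ℕ) ≤ (j:ℕ) by omega),
        Nat.min_eq_right (show (k:ℕ) ≤ (m₂:ℕ) by omega), Nat.max_eq_left (show (k:ℕ) ≤ (m₂:ℕ) by omega)] at eβ
      split_ifs at eα eβ <;> omega
    · rw [Nat.min_eq_left (show (m₁:ℕ) ≤ (m₂:ℕ) by omega), Nat.max_eq_right (show (m₁:ℕ) ≤ (m₂:ℕ) by omega),
        Nat.min_eq_right (show (j:ℕ) ≤ (m₁:ℕ) by omega), Nat.max_eq_left (show (j:ℕ) ≤ (m₁:ℕ) by omega),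
        Nat.min_eq_left (show (m₂:ℕ) ≤ (k:ℕ) by omega), Nat.max_eq_right (show (m₂:ℕ) ≤ (k:ℕ) by omega)] at eβ
      split_ifs at eα eβ <;> omega
    · rw [Nat.min_eq_right (show (m₂:ℕ) ≤ (m₁:ℕ) by omega), Nat.max_eq_left (show (m₂:ℕ) ≤ (m₁:ℕ) by omega),
        Nat.min_eq_right (show (j:ℕ) ≤ (m₁:ℕ) by omega), Nat.max_eq_left (show (j:ℕ) ≤ (m₁:ℕ) by omega),
        Nat.min_eq_left (show (m₂:ℕ) ≤ (k:ℕ) by omega), Nat.max_eq_right (show (m₂:ℕ) ≤ (k:ℕ) by omega)] at eβ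
      split_ifs at eα eβ <;> omega
    · rw [Nat.min_eq_left (show (m₁:ℕ) ≤ (m₂:ℕ) by omega), Nat.max_eq_right (show (m₁:ℕ) ≤ (m₂:ℕ) by omega),
        Nat.min_eq_right (show (j:ℕ) ≤ (m₁:ℕ) by omega), Nat.max_eq_left (show (j:ℕ) ≤ (m₁:ℕ) by omega),
        Nat.min_eq_right (show (k:ℕ) ≤ (m₂:ℕ) by omega), Nat.max_eq_left (show (k:ℕ) ≤ (m₂:ℕ) by omega)] at eβ
      split_ifs at eα eβ <;> omega
    · rw [Nat.min_eq_right (show (m₂:ℕ) ≤ (m₁:ℕ) by omega), Nat.max_eq_left (show (m₂:ℕ) ≤ (m₁:ℕ) by omega),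
        Nat.min_eq_right (show (j:ℕ) ≤ (m₁:ℕ) by omega), Nat.max_eq_left (show (j:ℕ) ≤ (m₁:ℕ) by omega),
        Nat.min_eq_right (show (k:ℕ) ≤ (m₂:ℕ) by omega), Nat.max_eq_left (show (k:ℕ) ≤ (m₂:ℕ) by omega)] at eβ
      split_ifs at eα eβ <;> omega
  · rintro ⟨hjk, hmin⟩
    obtain ⟨p, ⟨hp, hpj⟩, _⟩ := hα.2.1 j
    obtain ⟨r, ⟨hr, hrk⟩, _⟩ := hα.2.1 k
    have habp : (p.1:ℕ) < (p.2:ℕ) := hα.1 p hp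
    have habr : (r.1:ℕ) < (r.2:ℕ) := hα.1 r hr
    rcases hpj with hpj | hpj <;> rcases hrk with hrk | hrk
    · -- j = p.1, k = r.1 : double ascent, contradiction
      exfalso
      have hpne : p ≠ r := by
        intro he
        have h2 : k = p.1 := by rw [he]; exact hrk
        have := congrArg Fin.val (hpj.trans h2.symm)
        omega
      have hm1 : (j, p.2) ∈ α := by
        have : (j, p.2) = p := by rw [hpj]
        rwa [this]
      have hm2 : (k, r.2) ∈ α := by
        have : (k, r.2) = r := by rw [hrk]
        rwa [this]
      have hp2k : (p.2:ℕ) ≠ (k:ℕ) := by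
        intro he
        exact hpne (unique_through hα hp hr (x := k) (Or.inr (Fin.ext he).symm) (Or.inl hrk))
      have hr2j : (r.2:ℕ) ≠ (j:ℕ) := by
        intro he
        exact hpne (unique_through hα hp hr (x := j) (Or.inl hpj) (Or.inr (Fin.ext he).symm))
      have vpj := congrArg Fin.val hpj
      have vrk := congrArg Fin.val hrk
      have nc := (nc_iff _ _ _ _ (by omega : (p.1:ℤ) < (p.2:ℤ))
        (by omega : (r.1:ℤ) < (r.2:ℤ))).mp (hα.2.2 p hp r hr hpne)
      have h21 : (r.2:ℕ) < (p.2:ℕ) := by omega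
      have hkl2 : (k:ℕ) < (r.2:ℕ) := by omega
      have hLP := gamma_lp N α hα j k p.2 r.2 hk (Or.inr ⟨hm1, hm2, hkl2, h21⟩)
      have hTαγ : Tie N j k α ((α.filter (fun q => q.1 ≠ j ∧ q.2 ≠ j ∧ q.1 ≠ k ∧ q.2 ≠ k)) ∪
          {(j,k), (r.2,p.2)}) := by
        refine Or.inr ⟨hjk, p.2, r.2, Or.inr hm1, Or.inr hm2, ?_⟩
        rw [if_neg (show ¬ (p.2 ≤ r.2) from fun hle => absurd (hle : (p.2:ℕ) ≤ (r.2:ℕ)) (by omega))]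
      set γ := (α.filter (fun q => q.1 ≠ j ∧ q.2 ≠ j ∧ q.1 ≠ k ∧ q.2 ≠ k)) ∪
          ({(j,k), (r.2,p.2)} : Finset (Fin (2*N) × Fin (2*N))) with hγdef
      have hjkγ : ((j,k) : Fin (2*N) × Fin (2*N)) ∈ γ := by
        rw [hγdef]
        exact Finset.mem_union_right _ (Finset.mem_insert_self _ _)
      have happ := hmin γ hLP ⟨γ, Or.inl ⟨hjkγ, rfl⟩, hTαγ⟩
      obtain ⟨l₁', l₂', hc1', hc2', hw⟩ := tie_structure N α γ hα j k hk hjk hTαγ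
      have ho1' : (k:ℕ) < (l₁':ℕ) := by
        rcases hc1' with ⟨hm, h⟩ | ⟨_, h⟩
        · exfalso
          have he : (l₁',j) = p := unique_through hα hm hp (x := j) (Or.inr rfl) (Or.inl hpj)
          have h2 : p.2 = j := by rw [← he]
          have := congrArg Fin.val h2
          omega
        · exact h
      have ho2' : (k:ℕ) < (l₂':ℕ) := by
        rcases hc2' with ⟨hm, h⟩ | ⟨_, h⟩
        · exfalso
          have he : (l₂',k) = r := unique_through hα hm hr (x := k) (Or.inr rfl) (Or.inl hrk)
          have h2 : r.2 = k := by rw [← he]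
          have := congrArg Fin.val h2
          omega
        · exact h
      have hkN : (k:ℕ) + 1 < 2*N + 1 := by have := l₂'.isLt; omega
      have e := hw ⟨(k:ℕ)+1, hkN⟩
      have hle := happ ⟨(k:ℕ)+1, hkN⟩
      rw [Nat.min_eq_right (show (j:ℕ) ≤ (l₁':ℕ) by omega),
        Nat.max_eq_left (show (j:ℕ) ≤ (l₁':ℕ) by omega),
        Nat.min_eq_right (show (k:ℕ) ≤ (l₂':ℕ) by omega),
        Nat.max_eq_left (show (k:ℕ) ≤ (l₂':ℕ) by omega)] at e
      rcases le_or_gt (l₁':ℕ) (l₂':ℕ) with hmo | hmo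
      · rw [Nat.min_eq_left (show (l₁':ℕ) ≤ (l₂':ℕ) by omega),
          Nat.max_eq_right (show (l₁':ℕ) ≤ (l₂':ℕ) by omega)] at e
        simp only [Fin.val_mk] at e hle
        split_ifs at e <;> omega
      · rw [Nat.min_eq_right (show (l₂':ℕ) ≤ (l₁':ℕ) by omega),
          Nat.max_eq_left (show (l₂':ℕ) ≤ (l₁':ℕ) by omega)] at e
        simp only [Fin.val_mk] at e hle
        split_ifs at e <;> omega
    · -- j = p.1, k = r.2 : crossing, impossible
      exfalso
      have hpne : p ≠ r := by
        intro he
        have : p = (j,k) := by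
          rw [Prod.ext_iff]
          exact ⟨hpj.symm, by rw [he]; exact hrk.symm⟩
        exact hjk (this ▸ hp)
      have hp2k : (p.2:ℕ) ≠ (k:ℕ) := by
        intro he
        exact hpne (unique_through hα hp hr (x := k) (Or.inr (Fin.ext he).symm) (Or.inr hrk))
      have hr1j : (r.1:ℕ) ≠ (j:ℕ) := by
        intro he
        exact hpne (unique_through hα hp hr (x := j) (Or.inl hpj) (Or.inl (Fin.ext he).symm))
      have vpj := congrArg Fin.val hpj
      have vrk := congrArg Fin.val hrk
      have nc := (nc_iff _ _ _ _ (by omega : (p.1:ℤ) < (p.2:ℤ))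
        (by omega : (r.1:ℤ) < (r.2:ℤ))).mp (hα.2.2 p hp r hr hpne)
      omega
    · -- j = p.2, k = r.1 : valley!
      exact ⟨p, hp, r, hr, hpj.symm, hrk.symm⟩
    · -- j = p.2, k = r.2 : double descent, contradiction
      exfalso
      have hpne : p ≠ r := by
        intro he
        have h2 : k = p.2 := by rw [he]; exact hrk
        have := congrArg Fin.val (hpj.trans h2.symm)
        omega
      have hm1 : (p.1, j) ∈ α := by
        have : (p.1, j) = p := by rw [hpj]
        rwa [this]
      have hm2 : (r.1, k) ∈ α := by
        have : (r.1, k) = r := by rw [hrk]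
        rwa [this]
      have hr1j : (r.1:ℕ) ≠ (j:ℕ) := by
        intro he
        exact hpne (unique_through hα hp hr (x := j) (Or.inr hpj) (Or.inl (Fin.ext he).symm))
      have vpj := congrArg Fin.val hpj
      have vrk := congrArg Fin.val hrk
      have nc := (nc_iff _ _ _ _ (by omega : (p.1:ℤ) < (p.2:ℤ))
        (by omega : (r.1:ℤ) < (r.2:ℤ))).mp (hα.2.2 p hp r hr hpne)
      have h21 : (r.1:ℕ) < (p.1:ℕ) := by omega
      have hl1j : (p.1:ℕ) < (j:ℕ) := by omega
      have hLP := gamma_lp N α hα j k p.1 r.1 hk (Or.inl ⟨hm1, hm2, h21, hl1j⟩)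
      have hTαγ : Tie N j k α ((α.filter (fun q => q.1 ≠ j ∧ q.2 ≠ j ∧ q.1 ≠ k ∧ q.2 ≠ k)) ∪
          {(j,k), (r.1,p.1)}) := by
        refine Or.inr ⟨hjk, p.1, r.1, Or.inl hm1, Or.inl hm2, ?_⟩
        rw [if_neg (show ¬ (p.1 ≤ r.1) from fun hle => absurd (hle : (p.1:ℕ) ≤ (r.1:ℕ)) (by omega))]
      set γ := (α.filter (fun q => q.1 ≠ j ∧ q.2 ≠ j ∧ q.1 ≠ k ∧ q.2 ≠ k)) ∪
          ({(j,k), (r.1,p.1)} : Finset (Fin (2*N) × Fin (2*N))) with hγdef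
      have hjkγ : ((j,k) : Fin (2*N) × Fin (2*N)) ∈ γ := by
        rw [hγdef]
        exact Finset.mem_union_right _ (Finset.mem_insert_self _ _)
      have happ := hmin γ hLP ⟨γ, Or.inl ⟨hjkγ, rfl⟩, hTαγ⟩
      obtain ⟨l₁', l₂', hc1', hc2', hw⟩ := tie_structure N α γ hα j k hk hjk hTαγ
      have ho1' : (l₁':ℕ) < (j:ℕ) := by
        rcases hc1' with ⟨_, h⟩ | ⟨hm, h⟩
        · exact h
        · exfalso
          have he : (j,l₁') = p := unique_through hα hm hp (x := j) (Or.inl rfl) (Or.inr hpj)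
          have h2 : p.1 = j := by rw [← he]
          have := congrArg Fin.val h2
          omega
      have ho2' : (l₂':ℕ) < (j:ℕ) := by
        rcases hc2' with ⟨_, h⟩ | ⟨hm, h⟩
        · exact h
        · exfalso
          have he : (k,l₂') = r := unique_through hα hm hr (x := k) (Or.inl rfl) (Or.inr hrk)
          have h2 : r.1 = k := by rw [← he]
          have := congrArg Fin.val h2
          omega
      have hjN : (j:ℕ) < 2*N + 1 := by have := j.isLt; omega
      have e := hw ⟨(j:ℕ), hjN⟩
      have hle := happ ⟨(j:ℕ), hjN⟩
      rw [Nat.min_eq_left (show (l₁':ℕ) ≤ (j:ℕ) by omega),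
        Nat.max_eq_right (show (l₁':ℕ) ≤ (j:ℕ) by omega),
        Nat.min_eq_left (show (l₂':ℕ) ≤ (k:ℕ) by omega),
        Nat.max_eq_right (show (l₂':ℕ) ≤ (k:ℕ) by omega)] at e
      rcases le_or_gt (l₁':ℕ) (l₂':ℕ) with hmo | hmo
      · rw [Nat.min_eq_left (show (l₁':ℕ) ≤ (l₂':ℕ) by omega),
          Nat.max_eq_right (show (l₁':ℕ) ≤ (l₂':ℕ) by omega)] at e
        simp only [Fin.val_mk] at e hle
        split_ifs at e <;> omega
      · rw [Nat.min_eq_right (show (l₂':ℕ) ≤ (l₁':ℕ) by omega),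
          Nat.max_eq_left (show (l₂':ℕ) ≤ (l₁':ℕ) by omega)] at e
        simp only [Fin.val_mk] at e hle
        split_ifs at e <;> omega
end

section
/- Let v ∈ M_2^{⊗n} satisfy π̂_j(v) = 0 for all j = 1,...,n-1, where π̂_j applies the singlet functional π̂ to the j-th and (j+1)-st tensor factors. If additionally v is a K-eigenvector with eigenvalue q^{n-2ℓ}, then v is determined up to scalar: the space of such vectors is at most one-dimensional, and equals the weight-(n-2ℓ) space of the irreducible subrepresentation M_{n+1} generated by e_0⊗...⊗e_0. -/
open Finset

noncomputable section

/-- The weight (number of `1`s) of a basis index of `M₂^{⊗n}`: here `M₂^{⊗n}` is modelled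
concretely as functions `(Fin n → Fin 2) → ℂ` on the set of basis index tuples. -/
def wt {n : ℕ} (g : Fin n → Fin 2) : ℕ := ∑ i, (g i : ℕ)

/-- The action of `K` on `M₂^{⊗n}`: `K.e_f = q^{n - 2·wt f}·e_f`. -/
def Kact (q : ℂ) (n : ℕ) (v : (Fin n → Fin 2) → ℂ) : (Fin n → Fin 2) → ℂ :=
  fun g => q ^ ((n : ℤ) - 2 * (wt g : ℤ)) * v g

/-- The action of `E` on `M₂^{⊗n}` via the iterated coproduct
`Δ⁽ⁿ⁾(E) = ∑ᵢ 1⊗⋯⊗1⊗E⊗K⊗⋯⊗K` (slot `0` rightmost). -/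
def Eact (q : ℂ) (n : ℕ) (v : (Fin n → Fin 2) → ℂ) : (Fin n → Fin 2) → ℂ :=
  fun g => ∑ i ∈ Finset.univ.filter (fun i => g i = 0),
    q ^ (∑ j ∈ Finset.univ.filter (fun j => j < i), ((1 : ℤ) - 2 * ((g j : ℕ) : ℤ))) *
      v (Function.update g i 1)

/-- The action of `F` on `M₂^{⊗n}` via `Δ⁽ⁿ⁾(F) = ∑ᵢ K⁻¹⊗⋯⊗K⁻¹⊗F⊗1⊗⋯⊗1`. -/
def Fdown (q : ℂ) (n : ℕ) (v : (Fin n → Fin 2) → ℂ) : (Fin n → Fin 2) → ℂ :=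
  fun g => ∑ i ∈ Finset.univ.filter (fun i => g i = 1),
    q ^ (-∑ j ∈ Finset.univ.filter (fun j => i < j), ((1 : ℤ) - 2 * ((g j : ℕ) : ℤ))) *
      v (Function.update g i 0)

/-- The highest weight vector `e₀ ⊗ ⋯ ⊗ e₀` of `M₂^{⊗n}`. -/
def delta0 (n : ℕ) : (Fin n → Fin 2) → ℂ := fun g => if g = fun _ => 0 then 1 else 0

/-- `θ_l^{(n)} = F^l.(e₀ ⊗ ⋯ ⊗ e₀)`, spanning the weight spaces of the irreducible
subrepresentation `M_{n+1} ⊂ M₂^{⊗n}` generated by `e₀ ⊗ ⋯ ⊗ e₀`. -/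
def theta (q : ℂ) (n l : ℕ) : (Fin n → Fin 2) → ℂ := (Fdown q n)^[l] (delta0 n)

/-- The condition `π̂_j(v) = 0`, where the singlet functional `π̂` is applied at the two
consecutive tensor slots `a` and `b` (with `b = a + 1`), using the values
`π̂(e₀⊗e₀) = π̂(e₁⊗e₁) = 0`, `π̂(e₀⊗e₁) = (q⁻¹-q)/[2]`, `π̂(e₁⊗e₀) = (1-q⁻²)/[2]`
(the left tensor factor is the higher slot `b`). -/
def PihatZero (q : ℂ) (n : ℕ) (a b : Fin n) (v : (Fin n → Fin 2) → ℂ) : Prop :=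
  ∀ g : Fin n → Fin 2,
    ((q⁻¹ - q) / (q + q⁻¹)) * v (Function.update (Function.update g b 0) a 1) +
      ((1 - q⁻¹ ^ 2) / (q + q⁻¹)) * v (Function.update (Function.update g b 1) a 0) = 0

/-!
Since the two values of `π̂` differ by the factor `-q`, `π̂_j(v) = 0` says exactly that
`v g = q · v g'` whenever `g'` arises from `g` by moving a `1` from slot `a + 1` down to slot `a`.
Such a move lowers `posSum` (the sum of the positions of the `1`s) by one, and repeated moves
sort every word, so on each weight stratum `v g` is proportional to `q ^ posSum g`. As `q` is not a
root of unity, the `K`-eigenvalue confines `v` to a single stratum, hence `v` is a multiple of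
`qSym q n ℓ`. Conversely `qSym` satisfies both conditions, and
`F (qSym ℓ) = q^{1-n} [ℓ+1]_{q²} qSym (ℓ+1)`, so `θ_ℓ` is a nonzero multiple of `qSym ℓ`.
-/

open Function

theorem Finset.sum_apply_update_add {ι α M : Type*} [Fintype ι] [DecidableEq ι]
    [AddCommMonoid M] (F : ι → α → M) (g : ι → α) (a : ι) (x : α) :
    ∑ i, F i (update g a x i) + F a (g a) = ∑ i, F i (g i) + F a x := by
  rw [sum_congr rfl fun i _ => apply_update F g a x i, sum_update_of_mem (mem_univ a),
    sum_eq_add_sum_sdiff_singleton_of_mem (mem_univ a) fun i => F i (g i)]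
  abel

theorem Finset.sum_card_filter_lt_eq_sum_range {α M : Type*} [LinearOrder α] [AddCommMonoid M]
    (s : Finset α) (f : ℕ → M) : ∑ i ∈ s, f (#{j ∈ s | i < j}) = ∑ m ∈ range (#s), f m := by
  induction s using Finset.induction_on_min with
  | empty => simp
  | insert a s ha ih =>
    have has : a ∉ s := fun h => lt_irrefl a (ha a h)
    have hfa : ({j ∈ insert a s | a < j} : Finset α) = s := by
      rw [filter_insert, if_neg (lt_irrefl a), filter_true_of_mem ha]
    have hfi : ∀ i ∈ s, ({j ∈ insert a s | i < j} : Finset α) = {j ∈ s | i < j} := fun i hi => by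
      rw [filter_insert, if_neg (ha i hi).not_gt]
    rw [sum_insert has, card_insert_of_notMem has, sum_range_succ, hfa,
      sum_congr rfl fun i hi => by rw [hfi i hi], ih, add_comm]

section BinaryWords

variable {n : ℕ}

lemma sum_val_eq_card_filter (g : Fin n → Fin 2) (s : Finset (Fin n)) :
    ∑ j ∈ s, (g j : ℕ) = #{j ∈ s | g j = 1} := by
  rw [card_filter]
  refine sum_congr rfl fun j _ => ?_
  obtain h | h : g j = 0 ∨ g j = 1 := by omega
  all_goals simp [h]

def posSum (g : Fin n → Fin 2) : ℕ := ∑ i, (g i : ℕ) * i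

def initialOnes (n k : ℕ) : Fin n → Fin 2 := fun i => if (i : ℕ) < k then 1 else 0

lemma wt_update_add (g : Fin n → Fin 2) (a : Fin n) (x : Fin 2) :
    wt (update g a x) + g a = wt g + x :=
  sum_apply_update_add (fun _ (y : Fin 2) => (y : ℕ)) g a x

lemma posSum_update_add (g : Fin n → Fin 2) (a : Fin n) (x : Fin 2) :
    posSum (update g a x) + g a * a = posSum g + x * a :=
  sum_apply_update_add (fun (i : Fin n) (y : Fin 2) => (y : ℕ) * i) g a x

variable {a b : Fin n}

lemma wt_update_update_swap (hab : a ≠ b) (g : Fin n → Fin 2) :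
    wt (update (update g b 1) a 0) = wt (update (update g b 0) a 1) := by
  have h10 := wt_update_add (update g b 1) a 0
  have h01 := wt_update_add (update g b 0) a 1
  have h1 := wt_update_add g b 1
  have h0 := wt_update_add g b 0
  simp only [update_of_ne hab, Fin.val_zero, Fin.val_one] at h10 h01 h1 h0
  omega

lemma posSum_update_update_swap (hab : (b : ℕ) = a + 1) (g : Fin n → Fin 2) :
    posSum (update (update g b 1) a 0) = posSum (update (update g b 0) a 1) + 1 := by
  have hne : a ≠ b := fun h => by simp [h] at hab
  have h10 := posSum_update_add (update g b 1) a 0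
  have h01 := posSum_update_add (update g b 0) a 1
  have h1 := posSum_update_add g b 1
  have h0 := posSum_update_add g b 0
  simp only [update_of_ne hne, Fin.val_zero, Fin.val_one] at h10 h01 h1 h0
  omega

lemma antitone_of_adjacent_le {g : Fin n → Fin 2}
    (hg : ∀ a b : Fin n, (b : ℕ) = a + 1 → g b ≤ g a) : Antitone g := by
  cases n with
  | zero => exact fun i => i.elim0
  | succ n => exact Fin.antitone_iff_succ_le.2 fun i => hg _ _ (by simp)

lemma eq_initialOnes_of_antitone {g : Fin n → Fin 2} (hg : Antitone g) :
    g = initialOnes n (wt g) := by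
  have hwt : wt g = #({j | g j = 1} : Finset (Fin n)) := by rw [wt, sum_val_eq_card_filter]
  funext i
  obtain hi | hi : g i = 0 ∨ g i = 1 := by omega
  · have hsub : ({j | g j = 1} : Finset (Fin n)) ⊆ Iio i := fun j hj => by
      refine mem_Iio.2 (lt_of_not_ge fun hij => ?_)
      have := hg hij
      rw [hi, (mem_filter.mp hj).2] at this
      exact absurd this (by decide)
    have hcard := card_le_card hsub
    rw [Fin.card_Iio, ← hwt] at hcard
    rw [hi, initialOnes, if_neg (by omega)]
  · have hsub : Iic i ⊆ ({j | g j = 1} : Finset (Fin n)) := fun j hj => by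
      have := hg (mem_Iic.mp hj)
      rw [hi] at this
      simpa using le_antisymm (Fin.le_last _) this
    have hcard := card_le_card hsub
    rw [Fin.card_Iic, ← hwt] at hcard
    rw [hi, initialOnes, if_pos (by omega)]

lemma mul_pow_posSum_initialOnes {R : Type*} [CommMonoid R] {q : R}
    {v : (Fin n → Fin 2) → R}
    (hswap : ∀ a b : Fin n, (b : ℕ) = a + 1 → ∀ g,
      v (update (update g b 1) a 0) = q * v (update (update g b 0) a 1))
    (g : Fin n → Fin 2) :
    v g * q ^ posSum (initialOnes n (wt g)) = q ^ posSum g * v (initialOnes n (wt g)) := by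
  induction hN : posSum g using Nat.strong_induction_on generalizing g with
  | _ N ih =>
    by_cases hsorted : ∀ a b : Fin n, (b : ℕ) = a + 1 → g b ≤ g a
    · rw [← hN, ← eq_initialOnes_of_antitone (antitone_of_adjacent_le hsorted), mul_comm]
    push Not at hsorted
    rw [← hN]
    obtain ⟨a, b, hab, hlt⟩ := hsorted
    have hg : update (update g b 1) a 0 = g := by
      have : g a = 0 ∧ g b = 1 := by omega
      rw [← this.1, ← this.2, update_eq_self, update_eq_self]
    set g' := update (update g b 0) a 1
    have hwt : wt g' = wt g := by
      rw [← wt_update_update_swap (fun h => by simp [h] at hab), hg]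
    have hpos : posSum g = posSum g' + 1 := by rw [← posSum_update_update_swap hab, hg]
    calc v g * q ^ posSum (initialOnes n (wt g))
        = q * (v g' * q ^ posSum (initialOnes n (wt g'))) := by
          rw [← hg, hswap a b hab, hg, hwt, mul_assoc]
      _ = q ^ posSum g * v (initialOnes n (wt g)) := by
          rw [ih _ (by omega) g' rfl, hwt, hpos, pow_succ', mul_assoc]

end BinaryWords

section Quantum

variable {q : ℂ} {n : ℕ}

lemma zpow_injective_of_pow_ne_one (hq : q ≠ 0) (hroot : ∀ m : ℕ, 0 < m → q ^ m ≠ 1) :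
    Injective fun m : ℤ => q ^ m := by
  set u := Units.mk0 q hq
  have hu : ¬IsOfFinOrder u := by
    rw [isOfFinOrder_iff_pow_eq_one]
    rintro ⟨m, hm, hum⟩
    exact hroot m hm (by simpa [u, Units.ext_iff] using hum)
  intro m m' h
  exact injective_zpow_iff_not_isOfFinOrder.2 hu (by simpa [u, Units.ext_iff] using h)

lemma wt_eq_of_Kact_eq_smul (hq : q ≠ 0) (hroot : ∀ m : ℕ, 0 < m → q ^ m ≠ 1) {ℓ : ℕ}
    {v : (Fin n → Fin 2) → ℂ} (hK : Kact q n v = q ^ ((n : ℤ) - 2 * (ℓ : ℤ)) • v)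
    {g : Fin n → Fin 2} (hg : v g ≠ 0) : wt g = ℓ := by
  have h := congrFun hK g
  simp only [Kact, Pi.smul_apply, smul_eq_mul] at h
  have := zpow_injective_of_pow_ne_one hq hroot (mul_right_cancel₀ hg h)
  omega

lemma pihat_coeff_ne_zero (hq : q ≠ 0) (hq4 : q ^ 4 ≠ 1) : (1 - q⁻¹ ^ 2) / (q + q⁻¹) ≠ 0 := by
  refine div_ne_zero (fun h => hq4 ?_) (fun h => hq4 ?_) <;> field_simp at h
  · linear_combination (q ^ 2 + 1) * h
  · linear_combination (q ^ 2 - 1) * h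

lemma pihatZero_iff (hq : q ≠ 0) (hq4 : q ^ 4 ≠ 1) {a b : Fin n} {v : (Fin n → Fin 2) → ℂ} :
    PihatZero q n a b v ↔
      ∀ g, v (update (update g b 1) a 0) = q * v (update (update g b 0) a 1) := by
  have hcoeff : (q⁻¹ - q) / (q + q⁻¹) = -q * ((1 - q⁻¹ ^ 2) / (q + q⁻¹)) := by
    field_simp
    ring
  refine forall_congr' fun g => ?_
  rw [hcoeff, ← sub_eq_zero (a := v _)]
  constructor
  · intro h
    refine (mul_eq_zero.mp ?_).resolve_left (pihat_coeff_ne_zero hq hq4)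
    linear_combination h
  · intro h
    linear_combination ((1 - q⁻¹ ^ 2) / (q + q⁻¹)) * h

def qSym (q : ℂ) (n ℓ : ℕ) : (Fin n → Fin 2) → ℂ :=
  fun g => if wt g = ℓ then q ^ posSum g else 0

lemma qSym_swap (ℓ : ℕ) {a b : Fin n} (hab : (b : ℕ) = a + 1) (g : Fin n → Fin 2) :
    qSym q n ℓ (update (update g b 1) a 0) = q * qSym q n ℓ (update (update g b 0) a 1) := by
  simp only [qSym]
  rw [wt_update_update_swap (fun h => by simp [h] at hab), posSum_update_update_swap hab,
    pow_succ']
  split_ifs <;> ring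

lemma Kact_smul (c : ℂ) (v : (Fin n → Fin 2) → ℂ) : Kact q n (c • v) = c • Kact q n v := by
  funext g
  simp only [Kact, Pi.smul_apply, smul_eq_mul]
  ring

lemma Kact_qSym (ℓ : ℕ) : Kact q n (qSym q n ℓ) = q ^ ((n : ℤ) - 2 * (ℓ : ℤ)) • qSym q n ℓ := by
  funext g
  simp only [Kact, qSym, Pi.smul_apply, smul_eq_mul]
  split_ifs with h <;> simp [h]

lemma Fdown_smul (c : ℂ) (v : (Fin n → Fin 2) → ℂ) : Fdown q n (c • v) = c • Fdown q n v := by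
  funext g
  simp only [Fdown, Pi.smul_apply, smul_eq_mul, mul_sum]
  exact sum_congr rfl fun i _ => by ring

lemma Fdown_exponent {g : Fin n → Fin 2} {i : Fin n} (hi : g i = 1) :
    -∑ j ∈ univ.filter (fun j => i < j), ((1 : ℤ) - 2 * ((g j : ℕ) : ℤ))
        + posSum (update g i 0) =
      (1 - n) + 2 * #{j ∈ ({j | g j = 1} : Finset (Fin n)) | i < j} + posSum g := by
  have hpos := posSum_update_add g i 0
  have hcount : ∑ j ∈ Ioi i, (g j : ℕ) = #{j ∈ ({j | g j = 1} : Finset (Fin n)) | i < j} := by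
    rw [sum_val_eq_card_filter, filter_filter]
    congr 1
    ext j
    simp [and_comm]
  rw [hi] at hpos
  simp only [Fin.val_zero, Fin.val_one, zero_mul, one_mul, add_zero] at hpos
  rw [filter_lt_eq_Ioi, sum_sub_distrib, sum_const, Fin.card_Ioi, nsmul_one, ← mul_sum, ← hcount]
  have := i.isLt
  push_cast
  omega

lemma Fdown_qSym (hq : q ≠ 0) (l : ℕ) :
    Fdown q n (qSym q n l) =
      (q ^ (1 - (n : ℤ)) * ∑ m ∈ range (l + 1), (q ^ 2) ^ m) • qSym q n (l + 1) := by
  funext g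
  simp only [Fdown, qSym, Pi.smul_apply, smul_eq_mul]
  have hwt : ∀ i, g i = 1 → wt (update g i 0) + 1 = wt g := fun i hi => by
    simpa [hi] using wt_update_add g i 0
  split_ifs with hg
  · have hterm : ∀ i ∈ ({i | g i = 1} : Finset (Fin n)),
        q ^ (-∑ j ∈ univ.filter (fun j => i < j), ((1 : ℤ) - 2 * ((g j : ℕ) : ℤ))) *
            (if wt (update g i 0) = l then q ^ posSum (update g i 0) else 0) =
          q ^ (1 - (n : ℤ)) * q ^ posSum g *
            (q ^ 2) ^ #{j ∈ ({j | g j = 1} : Finset (Fin n)) | i < j} := by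
      intro i hi
      have hi : g i = 1 := (mem_filter.mp hi).2
      rw [if_pos (by have := hwt i hi; omega), ← zpow_natCast, ← zpow_add₀ hq,
        Fdown_exponent hi]
      simp only [zpow_add₀ hq, zpow_mul, zpow_natCast, zpow_ofNat]
      ring
    have hcard : #({j | g j = 1} : Finset (Fin n)) = l + 1 := by
      rw [← hg, wt, sum_val_eq_card_filter]
    rw [sum_congr rfl hterm, ← mul_sum, sum_card_filter_lt_eq_sum_range, hcard]
    ring
  · refine (sum_eq_zero fun i hi => ?_).trans (mul_zero _).symm
    have := hwt i (mem_filter.mp hi).2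
    rw [if_neg (by omega), mul_zero]

lemma delta0_eq_qSym_zero : delta0 n = qSym q n 0 := by
  funext g
  by_cases h : g = fun _ => 0
  · subst h
    simp [delta0, qSym, wt, posSum]
  · have hwt : wt g ≠ 0 := fun h0 => h <| funext fun i =>
      Fin.ext (by simpa using sum_eq_zero_iff.mp h0 i (mem_univ i))
    simp [delta0, qSym, h, hwt]

lemma theta_eq_smul_qSym (hq : q ≠ 0) (ℓ : ℕ) :
    theta q n ℓ =
      (∏ k ∈ range ℓ, q ^ (1 - (n : ℤ)) * ∑ m ∈ range (k + 1), (q ^ 2) ^ m) • qSym q n ℓ := by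
  induction ℓ with
  | zero => simp [theta, delta0_eq_qSym_zero (q := q)]
  | succ l ih =>
    rw [theta, iterate_succ_apply', ← theta, ih, Fdown_smul, Fdown_qSym hq, smul_smul,
      prod_range_succ, mul_comm]

lemma geom_sum_sq_ne_zero (hroot : ∀ m : ℕ, 0 < m → q ^ m ≠ 1) (k : ℕ) :
    ∑ m ∈ range (k + 1), (q ^ 2) ^ m ≠ 0 := by
  have h2 : q ^ 2 ≠ 1 := hroot 2 two_pos
  rw [geom_sum_eq h2, ← pow_mul]
  exact div_ne_zero (sub_ne_zero.2 (hroot _ (by positivity))) (sub_ne_zero.2 h2)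

lemma span_theta (hq : q ≠ 0) (hroot : ∀ m : ℕ, 0 < m → q ^ m ≠ 1) (ℓ : ℕ) :
    Submodule.span ℂ {theta q n ℓ} = Submodule.span ℂ {qSym q n ℓ} := by
  rw [theta_eq_smul_qSym hq, Submodule.span_singleton_smul_eq]
  exact (prod_ne_zero_iff.2 fun k _ =>
    mul_ne_zero (zpow_ne_zero _ hq) (geom_sum_sq_ne_zero hroot k)).isUnit

lemma eq_smul_qSym (hq : q ≠ 0) {ℓ : ℕ} {v : (Fin n → Fin 2) → ℂ}
    (hsupp : ∀ g, v g ≠ 0 → wt g = ℓ)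
    (hswap : ∀ a b : Fin n, (b : ℕ) = a + 1 → ∀ g,
      v (update (update g b 1) a 0) = q * v (update (update g b 0) a 1)) :
    v = (v (initialOnes n ℓ) / q ^ posSum (initialOnes n ℓ)) • qSym q n ℓ := by
  funext g
  simp only [Pi.smul_apply, smul_eq_mul, qSym]
  split_ifs with hg
  · have := mul_pow_posSum_initialOnes hswap g
    rw [hg] at this
    field_simp
    linear_combination this
  · rw [mul_zero]
    by_contra h
    exact hg (hsupp g h)

end Quantum

theorem pihat_kernel_eq_weight_space_general (q : ℂ) (hq : q ≠ 0)
    (hroot : ∀ n : ℕ, 0 < n → q ^ n ≠ 1) (n ℓ : ℕ) :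
    {v : (Fin n → Fin 2) → ℂ |
        Kact q n v = q ^ ((n : ℤ) - 2 * (ℓ : ℤ)) • v ∧
        ∀ a b : Fin n, (b : ℕ) = (a : ℕ) + 1 → PihatZero q n a b v} =
      (Submodule.span ℂ {theta q n ℓ} : Set ((Fin n → Fin 2) → ℂ)) := by
  have hq4 : q ^ 4 ≠ 1 := hroot 4 (by norm_num)
  ext v
  simp only [Set.mem_ofPred_eq, span_theta hq hroot, SetLike.mem_coe,
    Submodule.mem_span_singleton, pihatZero_iff hq hq4]
  constructor
  · rintro ⟨hK, hswap⟩
    exact ⟨_, (eq_smul_qSym hq (fun g => wt_eq_of_Kact_eq_smul hq hroot hK) hswap).symm⟩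
  · rintro ⟨c, rfl⟩
    refine ⟨by rw [Kact_smul, Kact_qSym, smul_comm], fun a b hab g => ?_⟩
    simp only [Pi.smul_apply, smul_eq_mul, qSym_swap ℓ hab]
    ring

/-- If `v ∈ M₂^{⊗n}` satisfies `π̂_j(v) = 0` for all `j = 1,…,n-1` and is a
`K`-eigenvector with eigenvalue `q^{n-2ℓ}`, then `v` is determined up to scalar: the space
of such vectors equals the weight-`(n-2ℓ)` space of the irreducible subrepresentation
`M_{n+1}` generated by `e₀ ⊗ ⋯ ⊗ e₀`, i.e. the span of `θ_ℓ = F^ℓ.(e₀⊗⋯⊗e₀)`;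
in particular it is at most one-dimensional. -/
theorem pihat_kernel_eq_weight_space (q : ℂ) (hq : q ≠ 0)
    (hroot : ∀ n : ℕ, 0 < n → q ^ n ≠ 1) (n ℓ : ℕ) (hℓ : ℓ ≤ n) :
    {v : (Fin n → Fin 2) → ℂ |
        Kact q n v = q ^ ((n : ℤ) - 2 * (ℓ : ℤ)) • v ∧
        ∀ a b : Fin n, (b : ℕ) = (a : ℕ) + 1 → PihatZero q n a b v} =
      (Submodule.span ℂ {theta q n ℓ} : Set ((Fin n → Fin 2) → ℂ)) :=
  pihat_kernel_eq_weight_space_general q hq hroot n ℓ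

end
end

section
/- The Gaussian free field partition function Z_GFF^{(N)}(x_1,...,x_{2N}) = ∏_{1≤k<l≤2N} (x_l - x_k)^{(1/2)(-1)^{l-k}}, defined for x_1 < x_2 < ... < x_{2N}, satisfies for each i = 1,...,2N the PDE [2∂_{x_i}^2 + ∑_{j≠i} ( (2/(x_j - x_i))∂_{x_j} - 1/(2(x_j - x_i)^2) )] Z_GFF^{(N)} = 0 (the multiple SLE null-field equations with κ = 4, h = 1/4). -/
/-!
On the chamber, `Z_GFF = exp L` with `L = ∑_{k<l} (σ_k σ_l / 2) log (x_l - x_k)` for the alternating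
charges `σ_k = (-1)^k`. Hence `∂_j Z = Z g_j` with `g_j = ∑_{k≠j} σ_j σ_k / (2 (x_j - x_k))` and
`∂_i² Z = Z (g_i² + ∂_i g_i)`, so after dividing by `Z` the equation becomes a rational identity in the
`x_k`. Its diagonal terms cancel because `σ_k² = 1`, and its off-diagonal terms cancel in pairs
`(j, k)`, `(k, j)` by the partial-fraction identity
`1/((a-b)(a-c)) + 1/((b-a)(b-c)) + 1/((c-a)(c-b)) = 0`.
-/

open Finset

/-- The Gaussian free field partition function
`Z_GFF^{(N)}(x₁,…,x_{2N}) = ∏_{k<l} (x_l - x_k)^{(1/2)(-1)^{l-k}}`. -/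
noncomputable def Zgff (N : ℕ) (x : Fin (2 * N) → ℝ) : ℝ :=
  ∏ p ∈ Finset.univ.filter (fun p : Fin (2 * N) × Fin (2 * N) => p.1 < p.2),
    (x p.2 - x p.1) ^ ((1 / 2 : ℝ) * (-1 : ℝ) ^ ((p.2 : ℕ) - (p.1 : ℕ)))

theorem two_nsmul_sum_filter_lt {ι M : Type*} [Fintype ι] [LinearOrder ι] [AddCommMonoid M]
    (f : ι → ι → M) (hf : ∀ k l, f k l = f l k) (hdiag : ∀ k, f k k = 0) :
    2 • ∑ p ∈ univ.filter (fun p : ι × ι => p.1 < p.2), f p.1 p.2 = ∑ k, ∑ l, f k l := by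
  have hsplit : ∀ k l, f k l = (if k < l then f k l else 0) + (if l < k then f l k else 0) := by
    intro k l
    rcases lt_trichotomy k l with h | rfl | h
    · simp [h, h.not_gt]
    · simp [hdiag]
    · simp [h, h.not_gt, hf k l]
  rw [sum_filter, Fintype.sum_prod_type, two_nsmul]
  conv_rhs => enter [2, k, 2, l]; rw [hsplit k l]
  simp only [sum_add_distrib]
  rw [sum_comm (f := fun k l => if l < k then f l k else 0)]

theorem isOpen_setOf_strictMono {ι α : Type*} [Finite ι] [Preorder ι] [TopologicalSpace α]
    [LinearOrder α] [OrderClosedTopology α] : IsOpen {y : ι → α | StrictMono y} := by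
  have : {y : ι → α | StrictMono y} = ⋂ k, ⋂ l, ⋂ (_ : k < l), {y | y k < y l} := by
    ext y; simp [StrictMono]
  rw [this]
  exact isOpen_iInter_of_finite fun k => isOpen_iInter_of_finite fun l =>
    isOpen_iInter_of_finite fun _ => isOpen_lt (continuous_apply k) (continuous_apply l)

theorem StrictMono.eventually_update {ι α : Type*} [Finite ι] [Preorder ι] [DecidableEq ι]
    [TopologicalSpace α] [LinearOrder α] [OrderClosedTopology α] {y : ι → α}
    (hy : StrictMono y) (j : ι) : ∀ᶠ t in nhds (y j), StrictMono (Function.update y j t) := by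
  have hcont : Continuous (Function.update y j) := continuous_const.update j continuous_id
  refine hcont.continuousAt.preimage_mem_nhds (isOpen_setOf_strictMono.mem_nhds ?_)
  simpa using hy

theorem sum_filter_lt_mul_single_sub_div {n : ℕ} (w : Fin n → Fin n → ℝ)
    (hw : ∀ k l, w k l = w l k) (y : Fin n → ℝ) (j : Fin n) :
    ∑ p ∈ univ.filter (fun p : Fin n × Fin n => p.1 < p.2),
        w p.1 p.2 * (((Pi.single j 1 : Fin n → ℝ) p.2 - (Pi.single j 1 : Fin n → ℝ) p.1) /
          (y p.2 - y p.1)) =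
      ∑ k ∈ univ.erase j, w j k / (y j - y k) := by
  -- The summand is symmetric in `(k, l)`, so the pair sum is half the full double sum, in which
  -- `δ` only keeps the terms with `k = j` or `l = j`.
  set δ : Fin n → ℝ := Pi.single j 1
  set g : Fin n → ℝ := fun k => w j k / (y j - y k)
  have hterm : ∀ k l, w k l * ((δ l - δ k) / (y l - y k)) =
      (if l = j then g k else 0) + (if k = j then g l else 0) := by
    intro k l
    by_cases hl : l = j <;> by_cases hk : k = j
    · simp [g, hl, hk]
    · simp [δ, g, hl, hk, hw k j, div_eq_mul_inv]
    · simp only [δ, g, hl, hk, Pi.single_eq_same, Pi.single_eq_of_ne hl, if_true, if_false]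
      rw [← neg_sub (y j), zero_sub, neg_div_neg_eq, zero_add, one_div, div_eq_mul_inv]
    · simp [δ, hl, hk]
  have hfull : ∑ k, ∑ l, w k l * ((δ l - δ k) / (y l - y k)) =
      2 * ∑ k ∈ univ.erase j, g k := by
    simp only [hterm, sum_add_distrib, sum_ite_eq', mem_univ, if_true]
    rw [sum_comm (f := fun k l => if k = j then g l else 0)]
    simp only [sum_ite_eq', mem_univ, if_true]
    -- the `k = j` term is `w j j / 0 = 0`
    rw [← sum_erase_add _ _ (mem_univ j)]
    simp only [g, sub_self, div_zero, add_zero]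
    ring
  have hpairs := two_nsmul_sum_filter_lt (fun k l => w k l * ((δ l - δ k) / (y l - y k)))
    (fun k l => by rw [hw k l, ← neg_sub (y k), ← neg_sub (δ k), neg_div_neg_eq])
    (fun k => by simp)
  rw [hfull, nsmul_eq_mul, Nat.cast_ofNat] at hpairs
  exact mul_left_cancel₀ two_ne_zero hpairs

theorem sum_sum_erase_eq_zero_of_antisymm {ι : Type*} [DecidableEq ι] (T : Finset ι)
    (F : ι → ι → ℝ) (hF : ∀ j ∈ T, ∀ k ∈ T, j ≠ k → F j k + F k j = 0) :
    ∑ j ∈ T, ∑ k ∈ T.erase j, F j k = 0 := by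
  have hswap : ∑ j ∈ T, ∑ k ∈ T.erase j, F j k = ∑ j ∈ T, ∑ k ∈ T.erase j, F k j :=
    sum_comm' fun j k => by simp only [mem_erase]; tauto
  have hsum : ∑ j ∈ T, ∑ k ∈ T.erase j, (F j k + F k j) = 0 :=
    sum_eq_zero fun j hj => sum_eq_zero fun k hk =>
      hF j hj k (mem_of_mem_erase hk) (ne_of_mem_erase hk).symm
  simp only [sum_add_distrib, ← hswap] at hsum
  linarith

theorem one_div_sub_div_sub_cyclic_sum_eq_zero {K : Type*} [Field K] {a b c : K}
    (hab : a ≠ b) (hac : a ≠ c) (hbc : b ≠ c) :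
    1 / (a - b) / (a - c) + 1 / (b - a) / (b - c) + 1 / (c - a) / (c - b) = 0 := by
  field_simp [sub_ne_zero.2 hab, sub_ne_zero.2 hac, sub_ne_zero.2 hbc, sub_ne_zero.2 hab.symm,
    sub_ne_zero.2 hac.symm, sub_ne_zero.2 hbc.symm]
  ring

namespace CoulombGas

variable {n : ℕ} (σ : Fin n → ℝ)

noncomputable def logZ (y : Fin n → ℝ) : ℝ :=
  ∑ p ∈ univ.filter (fun p : Fin n × Fin n => p.1 < p.2),
    σ p.1 * σ p.2 / 2 * Real.log (y p.2 - y p.1)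

noncomputable def gradLogZ (y : Fin n → ℝ) (j : Fin n) : ℝ :=
  ∑ k ∈ univ.erase j, σ j * σ k / 2 / (y j - y k)

theorem hasDerivAt_logZ_update {y : Fin n → ℝ} (hy : StrictMono y) (j : Fin n) :
    HasDerivAt (fun t => logZ σ (Function.update y j t)) (gradLogZ σ y j) (y j) := by
  have hcoord := hasDerivAt_pi.1 (hasDerivAt_update y j (y j))
  rw [gradLogZ, ← sum_filter_lt_mul_single_sub_div (fun k l => σ k * σ l / 2)
    (fun k l => by ring) y j]
  refine HasDerivAt.fun_sum fun p hp => ?_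
  have hpos : 0 < y p.2 - y p.1 := sub_pos.2 (hy (mem_filter.1 hp).2)
  have := (((hcoord p.2).fun_sub (hcoord p.1)).log ?_).const_mul (σ p.1 * σ p.2 / 2)
  · simpa only [Function.update_eq_self] using this
  · simpa only [Function.update_eq_self] using hpos.ne'

theorem hasDerivAt_gradLogZ_update_self {y : Fin n → ℝ} (hy : Function.Injective y) (j : Fin n) :
    HasDerivAt (fun t => gradLogZ σ (Function.update y j t) j)
      (-∑ k ∈ univ.erase j, σ j * σ k / 2 / (y j - y k) ^ 2) (y j) := by
  have hfun : (fun t => gradLogZ σ (Function.update y j t) j) =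
      fun t => ∑ k ∈ univ.erase j, σ j * σ k / 2 * (t - y k)⁻¹ := by
    funext t
    refine sum_congr rfl fun k hk => ?_
    rw [Function.update_self, Function.update_of_ne (ne_of_mem_erase hk), div_eq_mul_inv]
  rw [hfun, ← sum_neg_distrib]
  refine HasDerivAt.fun_sum fun k hk => ?_
  have hne : y j - y k ≠ 0 := sub_ne_zero.2 (hy.ne (ne_of_mem_erase hk).symm)
  have := (((hasDerivAt_id' (y j)).sub_const (y k)).fun_inv hne).const_mul (σ j * σ k / 2)
  exact this.congr_deriv (by ring)

theorem hasDerivAt_update_of_eqOn_exp_logZ {F : (Fin n → ℝ) → ℝ}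
    (hF : Set.EqOn F (fun y => Real.exp (logZ σ y)) {y | StrictMono y})
    {y : Fin n → ℝ} (hy : StrictMono y) (j : Fin n) :
    HasDerivAt (fun t => F (Function.update y j t)) (F y * gradLogZ σ y j) (y j) := by
  have hexp := (hasDerivAt_logZ_update σ hy j).exp
  have hFy : F y = Real.exp (logZ σ y) := hF hy
  rw [Function.update_eq_self, ← hFy] at hexp
  exact hexp.congr_of_eventuallyEq ((hy.eventually_update j).mono fun t ht => hF ht)

theorem iteratedDeriv_two_update_of_eqOn_exp_logZ {F : (Fin n → ℝ) → ℝ}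
    (hF : Set.EqOn F (fun y => Real.exp (logZ σ y)) {y | StrictMono y})
    {y : Fin n → ℝ} (hy : StrictMono y) (i : Fin n) :
    iteratedDeriv 2 (fun t => F (Function.update y i t)) (y i) =
      F y * (gradLogZ σ y i ^ 2 - ∑ k ∈ univ.erase i, σ i * σ k / 2 / (y i - y k) ^ 2) := by
  have hderiv : deriv (fun t => F (Function.update y i t)) =ᶠ[nhds (y i)]
      fun t => F (Function.update y i t) * gradLogZ σ (Function.update y i t) i := by
    filter_upwards [hy.eventually_update i] with t ht
    have := hasDerivAt_update_of_eqOn_exp_logZ σ hF ht i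
    simp only [Function.update_idem, Function.update_self] at this
    exact this.deriv
  have hprod := (hasDerivAt_update_of_eqOn_exp_logZ σ hF hy i).fun_mul
    (hasDerivAt_gradLogZ_update_self σ hy.injective i)
  rw [iteratedDeriv_succ, iteratedDeriv_one, hderiv.deriv_eq, hprod.deriv,
    Function.update_eq_self]
  ring

theorem nullField_identity (hσ : ∀ k, σ k ^ 2 = 1) {x : Fin n → ℝ} (hx : Function.Injective x)
    (i : Fin n) :
    2 * (gradLogZ σ x i ^ 2 - ∑ k ∈ univ.erase i, σ i * σ k / 2 / (x i - x k) ^ 2) +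
      ∑ j ∈ univ.erase i, (2 / (x j - x i) * gradLogZ σ x j - 1 / (2 * (x j - x i) ^ 2)) = 0 := by
  set T := univ.erase i
  set a : Fin n → ℝ := fun j => σ i * σ j / 2 / (x i - x j)
  have hsq : gradLogZ σ x i ^ 2 = ∑ j ∈ T, ∑ k ∈ T, a j * a k := by
    rw [sq, gradLogZ, sum_mul_sum]
  have hgrad : ∀ j ∈ T, gradLogZ σ x j =
      σ j * σ i / 2 / (x j - x i) + ∑ k ∈ T.erase j, σ j * σ k / 2 / (x j - x k) := by
    intro j hj
    rw [gradLogZ, ← add_sum_erase _ _ (mem_erase.2 ⟨(ne_of_mem_erase hj).symm, mem_univ i⟩),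
      erase_right_comm]
  set diag : Fin n → ℝ := fun j => 2 * (a j * a j) - 2 * (σ i * σ j / 2 / (x i - x j) ^ 2) +
    (2 / (x j - x i) * (σ j * σ i / 2 / (x j - x i)) - 1 / (2 * (x j - x i) ^ 2))
  set off : Fin n → Fin n → ℝ := fun j k =>
    2 * (a j * a k) + 2 / (x j - x i) * (σ j * σ k / 2 / (x j - x k))
  have hsplit : 2 * (gradLogZ σ x i ^ 2 - ∑ k ∈ T, σ i * σ k / 2 / (x i - x k) ^ 2) +
      ∑ j ∈ T, (2 / (x j - x i) * gradLogZ σ x j - 1 / (2 * (x j - x i) ^ 2)) =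
      ∑ j ∈ T, (diag j + ∑ k ∈ T.erase j, off j k) := by
    rw [hsq, mul_sub, mul_sum, mul_sum, ← sum_sub_distrib, ← sum_add_distrib]
    refine sum_congr rfl fun j hj => ?_
    rw [← add_sum_erase _ _ hj, hgrad j hj]
    simp only [diag, off, sum_add_distrib, ← mul_sum]
    ring
  have hdiag : ∀ j ∈ T, diag j = 0 := by
    intro j hj
    simp only [diag, a]
    rw [show x j - x i = -(x i - x j) by ring]
    generalize x i - x j = d
    linear_combination (σ j ^ 2 / (2 * d ^ 2)) * hσ i + 1 / (2 * d ^ 2) * hσ j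
  have hoff : ∀ j ∈ T, ∀ k ∈ T, j ≠ k → off j k + off k j = 0 := by
    intro j hj k hk hjk
    have h3 := one_div_sub_div_sub_cyclic_sum_eq_zero (hx.ne (ne_of_mem_erase hj).symm)
      (hx.ne (ne_of_mem_erase hk).symm) (hx.ne hjk)
    simp only [off, a]
    linear_combination (σ j * σ k) * h3 +
      (σ j * σ k / (x i - x j) / (x i - x k)) * hσ i
  rw [hsplit, sum_add_distrib, sum_eq_zero hdiag, sum_sum_erase_eq_zero_of_antisymm T off hoff,
    add_zero]

end CoulombGas

theorem Zgff_eqOn_exp_logZ (N : ℕ) :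
    Set.EqOn (Zgff N) (fun y => Real.exp (CoulombGas.logZ (fun k => (-1) ^ (k : ℕ)) y))
      {y | StrictMono y} := by
  intro y hy
  dsimp only
  rw [Zgff, CoulombGas.logZ, Real.exp_sum]
  refine prod_congr rfl fun p hp => ?_
  have hlt : p.1 < p.2 := (mem_filter.1 hp).2
  rw [Real.rpow_def_of_pos (sub_pos.2 (hy hlt)), mul_comm]
  congr 2
  obtain ⟨m, hm⟩ := Nat.exists_eq_add_of_le hlt.le
  rw [hm, Nat.add_sub_cancel_left, pow_add, ← mul_assoc, ← pow_add,
    Even.neg_one_pow ⟨p.1, rfl⟩]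
  ring

/-- On the chamber `x₁ < ⋯ < x_{2N}`, the GFF partition function satisfies
for each `i` the multiple SLE null-field PDE with `κ = 4`, `h = 1/4`:
`[2∂ᵢ² + ∑_{j≠i} ((2/(x_j-x_i))∂_j - 1/(2(x_j-x_i)²))] Z = 0`. -/
theorem Zgff_nullfield (N : ℕ) (x : Fin (2 * N) → ℝ) (hx : StrictMono x)
    (i : Fin (2 * N)) :
    2 * iteratedDeriv 2 (fun t => Zgff N (Function.update x i t)) (x i) +
      ∑ j ∈ Finset.univ.erase i,
        ((2 / (x j - x i)) * deriv (fun t => Zgff N (Function.update x j t)) (x j) -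
          (1 / (2 * (x j - x i) ^ 2)) * Zgff N x) = 0 := by
  set σ : Fin (2 * N) → ℝ := fun k => (-1) ^ (k : ℕ)
  have hσ : ∀ k, σ k ^ 2 = 1 := fun k => by
    rw [← pow_mul, mul_comm, pow_mul]
    norm_num
  have hZ := Zgff_eqOn_exp_logZ N
  have hsum : ∑ j ∈ univ.erase i,
      ((2 / (x j - x i)) * deriv (fun t => Zgff N (Function.update x j t)) (x j) -
        (1 / (2 * (x j - x i) ^ 2)) * Zgff N x) =
      Zgff N x * ∑ j ∈ univ.erase i,
        (2 / (x j - x i) * CoulombGas.gradLogZ σ x j - 1 / (2 * (x j - x i) ^ 2)) := by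
    rw [mul_sum]
    refine sum_congr rfl fun j _ => ?_
    rw [(CoulombGas.hasDerivAt_update_of_eqOn_exp_logZ σ hZ hx j).deriv]
    ring
  rw [CoulombGas.iteratedDeriv_two_update_of_eqOn_exp_logZ σ hZ hx i, hsum]
  linear_combination Zgff N x * CoulombGas.nullField_identity σ hσ hx.injective i
end
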